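/- arXiv:2601.10548 — 15 statements merged into one kernel-verified Lean document; each statement's English description precedes it below -/
import Mathlib

section
/- Let ℓ > r ≥ 2 be integers and define f(k) = (k-1)(k-2)···(k-r+1)/k^(ℓ-1) for integers k ≥ r. Then f attains its maximum at a unique integer m in [r, ∞). -/
/-!
With `n = r - 1` and `a = ℓ - 1`, the telescoping of the product gives
`f (k + 1) * ψ (1 / k) = f k` for `ψ t = (1 + t) ^ a * (1 - n * t)`, so `f` descends from `k` to
`k + 1` exactly when `ψ (1 / k) > 1`; `ψ (1 / k) = 1` is impossible, as it would make `(k + 1) ^ a`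
divide `k ^ (a + 1)`. Since `log ψ` is concave and vanishes at `0`, the set where `ψ > 1` is an
interval with left end `0`, so once `f` descends it keeps descending. As `f k ≤ 1 / k`, it does
descend eventually, and the maximum sits at the first descent.
-/

open Real Set Finset

theorem ConcaveOn.apply_smul_pos {E : Type*} [AddCommGroup E] [Module ℝ E] {s : Set E}
    {φ : E → ℝ} (hφ : ConcaveOn ℝ s φ) (h0 : 0 ∈ s) (hφ0 : φ 0 = 0) {x : E} (hx : x ∈ s)
    (hφx : 0 < φ x) {θ : ℝ} (hθ0 : 0 < θ) (hθ1 : θ ≤ 1) : 0 < φ (θ • x) := by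
  have h := hφ.2 h0 hx (sub_nonneg.2 hθ1) hθ0.le (sub_add_cancel 1 θ)
  simp only [smul_zero, zero_add, hφ0, smul_eq_mul, mul_zero] at h
  exact (mul_pos hθ0 hφx).trans_le h

theorem concaveOn_log_one_add_mul (c : ℝ) :
    ConcaveOn ℝ {t | 0 < 1 + c * t} (fun t ↦ log (1 + c * t)) := by
  convert strictConcaveOn_log_Ioi.concaveOn.comp_affineMap (AffineMap.lineMap (1 : ℝ) (1 + c))
    using 1 <;> ext t <;> simp [AffineMap.lineMap_apply_ring', mul_comm, add_comm]

def stepRatio (a : ℕ) (b t : ℝ) : ℝ := (1 + t) ^ a * (1 - b * t)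

theorem concaveOn_log_stepRatio (a : ℕ) (b : ℝ) :
    ConcaveOn ℝ {t | 0 < 1 + t ∧ 0 < 1 - b * t} (fun t ↦ log (stepRatio a b t)) := by
  have h₁ := concaveOn_log_one_add_mul 1
  have h₂ := concaveOn_log_one_add_mul (-b)
  have hS : {t : ℝ | 0 < 1 + t ∧ 0 < 1 - b * t} = {t | 0 < 1 + 1 * t} ∩ {t | 0 < 1 + -b * t} := by
    ext t; simp [neg_mul, ← sub_eq_add_neg]
  rw [hS]
  refine ((h₁.subset inter_subset_left (h₁.1.inter h₂.1)).smul (Nat.cast_nonneg a)).add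
    (h₂.subset inter_subset_right (h₁.1.inter h₂.1)) |>.congr ?_
  rintro t ⟨ht₁, ht₂⟩
  simp only [mem_ofPred_eq, one_mul, neg_mul, ← sub_eq_add_neg] at ht₁ ht₂
  simp [stepRatio, log_mul (pow_pos ht₁ a).ne' ht₂.ne', log_pow, neg_mul, ← sub_eq_add_neg]

theorem one_lt_stepRatio_of_le {a : ℕ} {b s t : ℝ} (hs : 0 < s) (hst : s ≤ t)
    (hbt : b * t < 1) (ht : 1 < stepRatio a b t) : 1 < stepRatio a b s := by
  have hconc := concaveOn_log_stepRatio a b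
  have h0 : (0 : ℝ) ∈ {t | 0 < 1 + t ∧ 0 < 1 - b * t} := by norm_num
  have htS : t ∈ {t | 0 < 1 + t ∧ 0 < 1 - b * t} := ⟨by linarith, by linarith⟩
  have hθ : s = (s / t) • t := by rw [smul_eq_mul, div_mul_cancel₀ _ (by linarith)]
  have hsS : s ∈ {t | 0 < 1 + t ∧ 0 < 1 - b * t} := by
    rw [hθ]
    exact hconc.1.smul_mem_of_zero_mem h0 htS
      ⟨div_nonneg hs.le (by linarith), div_le_one_of_le₀ hst (by linarith)⟩
  have hlog := hconc.apply_smul_pos h0 (by simp [stepRatio]) htS (log_pos ht)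
    (div_pos hs (by linarith)) (div_le_one_of_le₀ hst (by linarith))
  rw [← hθ, log_pos_iff (by unfold stepRatio; exact (mul_pos (pow_pos hsS.1 a) hsS.2).le)] at hlog
  exact hlog

theorem prod_range_add_one_sub_mul {R : Type*} [CommRing R] (n : ℕ) (x : R) :
    (∏ i ∈ range n, (x + 1 - (i + 1))) * (x - n) = (∏ i ∈ range n, (x - (i + 1))) * x := by
  have h := prod_range_succ' (fun i : ℕ ↦ x - i) n
  rw [prod_range_succ] at h
  simpa [add_sub_add_right_eq_sub] using h

theorem Nat.not_add_one_pow_dvd_pow {k a : ℕ} (hk : 0 < k) (ha : 0 < a) (b : ℕ) :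
    ¬ (k + 1) ^ a ∣ k ^ b := by
  intro h
  have hcop : Nat.Coprime ((k + 1) ^ a) (k ^ b) :=
    (Nat.coprime_self_add_left.2 (Nat.coprime_one_left k)).pow a b
  have := Nat.pow_eq_one.1 (hcop.eq_one_of_dvd h)
  omega

noncomputable def turanFun (n a : ℕ) (x : ℝ) : ℝ := (∏ i ∈ range n, (x - (i + 1))) / x ^ a

section turanFun

variable {n a : ℕ}

theorem turanFun_pos {x : ℝ} (hx : n < x) : 0 < turanFun n a x := by
  have hx0 : 0 < x := (Nat.cast_nonneg n).trans_lt hx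
  refine div_pos (prod_pos fun i hi ↦ ?_) (pow_pos hx0 a)
  have : (i : ℝ) + 1 ≤ n := by exact_mod_cast mem_range.1 hi
  linarith

theorem turanFun_add_one_mul_stepRatio {x : ℝ} (hx : 0 < x) :
    turanFun n a (x + 1) * stepRatio a n x⁻¹ = turanFun n a x := by
  have h := prod_range_add_one_sub_mul n x
  have hinv : 1 + x⁻¹ = (x + 1) / x := by field_simp
  unfold turanFun stepRatio
  rw [hinv, div_pow]
  field_simp
  linear_combination h

theorem turanFun_add_one_lt_iff {x : ℝ} (hx : n < x) :
    turanFun n a (x + 1) < turanFun n a x ↔ 1 < stepRatio a n x⁻¹ := by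
  conv_lhs => rw [← turanFun_add_one_mul_stepRatio ((Nat.cast_nonneg n).trans_lt hx)]
  exact lt_mul_iff_one_lt_right (turanFun_pos (by linarith))

theorem turanFun_add_one_ne {x : ℝ} (hx : n < x) (hψ : stepRatio a n x⁻¹ ≠ 1) :
    turanFun n a (x + 1) ≠ turanFun n a x := by
  intro h
  have hstep := turanFun_add_one_mul_stepRatio (n := n) (a := a) ((Nat.cast_nonneg n).trans_lt hx)
  rw [h, mul_eq_left₀ (turanFun_pos hx).ne'] at hstep
  exact hψ hstep

theorem turanFun_descent_persists {x : ℝ} (hx : n < x)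
    (h : turanFun n a (x + 1) < turanFun n a x) :
    turanFun n a (x + 1 + 1) < turanFun n a (x + 1) := by
  have hx0 : 0 < x := (Nat.cast_nonneg n).trans_lt hx
  rw [turanFun_add_one_lt_iff hx] at h
  rw [turanFun_add_one_lt_iff (by linarith)]
  refine one_lt_stepRatio_of_le (by positivity) (inv_anti₀ hx0 (by linarith)) ?_ h
  rwa [← div_eq_mul_inv, div_lt_one hx0]

theorem turanFun_le_inv (hna : n < a) {x : ℝ} (hx : 1 ≤ x) (hnx : n ≤ x) :
    turanFun n a x ≤ x⁻¹ := by
  have hx0 : 0 < x := by linarith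
  have hprod : ∏ i ∈ range n, (x - (i + 1)) ≤ x ^ n := by
    calc ∏ i ∈ range n, (x - (i + 1)) ≤ ∏ _i ∈ range n, x := by
          refine prod_le_prod (fun i hi ↦ ?_) fun i _ ↦ by linarith [i.cast_nonneg (α := ℝ)]
          have : (i : ℝ) + 1 ≤ n := by exact_mod_cast mem_range.1 hi
          linarith
      _ = x ^ n := by simp
  calc turanFun n a x ≤ x ^ n / x ^ a := by unfold turanFun; gcongr
    _ ≤ x⁻¹ := by
      rw [div_le_iff₀ (by positivity), ← div_eq_inv_mul, le_div_iff₀ hx0, ← pow_succ]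
      exact pow_le_pow_right₀ hx hna


theorem stepRatio_inv_ne_one {k : ℕ} (ha : 0 < a) (hk : n < k) :
    stepRatio a n (k : ℝ)⁻¹ ≠ 1 := by
  intro h
  have hk0 : (0 : ℝ) < k := by exact_mod_cast (Nat.zero_le n).trans_lt hk
  have hR : ((k : ℝ) + 1) ^ a * ((k - n : ℕ) : ℝ) = (k : ℝ) ^ (a + 1) := by
    have hinv : 1 + (k : ℝ)⁻¹ = (k + 1) / k := by field_simp
    unfold stepRatio at h
    rw [hinv, div_pow] at h
    field_simp at h
    rw [Nat.cast_sub hk.le]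
    linear_combination h
  exact Nat.not_add_one_pow_dvd_pow ((Nat.zero_le n).trans_lt hk) ha (a + 1)
    (Dvd.intro _ (by exact_mod_cast hR))

theorem exists_turanFun_lt (hna : n < a) (N : ℕ) {ε : ℝ} (hε : 0 < ε) :
    ∃ k : ℕ, N ≤ k ∧ turanFun n a k < ε := by
  obtain ⟨K, hK⟩ := exists_nat_gt ε⁻¹
  set k := K + N + n + 1
  have hKk : (K : ℝ) + 1 ≤ k := by exact_mod_cast (show K + 1 ≤ k by omega)
  have hnk : (n : ℝ) ≤ k := by exact_mod_cast (show n ≤ k by omega)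
  refine ⟨k, by omega, ?_⟩
  calc turanFun n a k ≤ (k : ℝ)⁻¹ := turanFun_le_inv hna (by linarith [K.cast_nonneg (α := ℝ)]) hnk
    _ < ε := (inv_lt_comm₀ (by linarith) hε).2 (by linarith)

end turanFun

theorem existsUnique_strictMax_of_descent_persists {α : Type*} [LinearOrder α] {g : ℕ → α}
    {r : ℕ} (hne : ∀ k, r ≤ k → g (k + 1) ≠ g k)
    (hpersist : ∀ k, r ≤ k → g (k + 1) < g k → g (k + 2) < g (k + 1))
    (hlow : ∃ k, r ≤ k ∧ g k < g r) :
    ∃! m, r ≤ m ∧ ∀ k, r ≤ k → k ≠ m → g k < g m := by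
  classical
  have hdesc : ∃ k, r ≤ k ∧ g (k + 1) < g k := by
    by_contra! hmono
    obtain ⟨k, hrk, hk⟩ := hlow
    exact hk.not_ge <| monotoneOn_of_le_add_one ordConnected_Ici
      (fun j _ hj _ ↦ hmono j hj) self_mem_Ici hrk hrk
  obtain ⟨hrm, hm⟩ := Nat.find_spec hdesc
  set m := Nat.find hdesc
  have hup : StrictMonoOn g (Set.Icc r m) := strictMonoOn_of_lt_add_one ordConnected_Icc
    fun j _ hj hj₁ ↦
      (not_lt.1 fun h ↦ Nat.find_min hdesc hj₁.2 ⟨hj.1, h⟩).lt_of_ne (hne j hj.1).symm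
  have hdown : StrictAntiOn g (Ici m) := strictAntiOn_of_add_one_lt ordConnected_Ici
    fun j _ hj _ ↦ Nat.le_induction hm (fun i hi ih ↦ hpersist i (hrm.trans hi) ih) j hj
  have hmax : ∀ k, r ≤ k → k ≠ m → g k < g m := by
    intro k hrk hkm
    rcases hkm.lt_or_gt with h | h
    · exact hup ⟨hrk, h.le⟩ ⟨hrm, le_rfl⟩ h
    · exact hdown self_mem_Ici h.le h
  refine ⟨m, ⟨hrm, hmax⟩, fun m' ⟨hrm', hm'⟩ ↦ ?_⟩
  by_contra hne'
  exact (hm' m hrm (Ne.symm hne')).asymm (hmax m' hrm' hne')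

/-- Let `ℓ > r ≥ 2` and `f k = (k-1)(k-2)⋯(k-r+1)/k^(ℓ-1)` for integers `k ≥ r`.
Then `f` attains its maximum at a unique integer `m ≥ r` (strictly above all other values). -/
theorem turan_unique_maximizer (r ℓ : ℕ) (hr : 2 ≤ r) (hℓ : r < ℓ)
    (f : ℕ → ℝ)
    (hf : ∀ k, f k = (∏ i ∈ Finset.range (r - 1), ((k : ℝ) - (i + 1))) / (k : ℝ) ^ (ℓ - 1)) :
    ∃! m : ℕ, r ≤ m ∧ ∀ k, r ≤ k → k ≠ m → f k < f m := by
  obtain ⟨n, rfl⟩ : ∃ n, r = n + 1 := ⟨r - 1, by omega⟩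
  obtain ⟨a, rfl⟩ : ∃ a, ℓ = a + 1 := ⟨ℓ - 1, by omega⟩
  have hf' : f = fun k : ℕ ↦ turanFun n a k := funext fun k ↦ by simpa [turanFun] using hf k
  subst hf'
  refine existsUnique_strictMax_of_descent_persists (fun k hk ↦ ?_) (fun k hk hdesc ↦ ?_) ?_
  · have hnk : (n : ℝ) < k := by exact_mod_cast hk
    rw [Nat.cast_succ]
    exact turanFun_add_one_ne hnk (stepRatio_inv_ne_one (by omega) hk)
  · have hnk : (n : ℝ) < k := by exact_mod_cast hk
    simp only [Nat.cast_succ] at hdesc ⊢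
    exact turanFun_descent_persists hnk hdesc
  · exact exists_turanFun_lt (by omega) (n + 1) (turanFun_pos (by push_cast; linarith))
end

section
/- Let k₀ ≥ 2 be an integer and ℓ > r ≥ 2 integers with r - 1 < k₀. If f(k) = (k-1)_{r-1}/k^(ℓ-1) (falling factorial notation), then f(k₀) ≠ f(k₀+1); that is, the discrete function f never takes equal values at two consecutive integers ≥ r. -/
/-- `f` never takes equal values at two consecutive integers `≥ r`. -/
theorem consecutive_values_distinct (r ℓ k₀ : ℕ) (hr : 2 ≤ r) (hℓ : r < ℓ)
    (hk₀ : 2 ≤ k₀) (hk : r - 1 < k₀)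
    (f : ℕ → ℝ)
    (hf : ∀ k, f k = (∏ i ∈ Finset.range (r - 1), ((k : ℝ) - (i + 1))) / (k : ℝ) ^ (ℓ - 1)) :
    f k₀ ≠ f (k₀ + 1) := by
  intro h
  rw [hf k₀, hf (k₀ + 1)] at h
  set N₀ := ∏ i ∈ Finset.range (r - 1), (k₀ - (i + 1)) with hN0
  set N₁ := ∏ i ∈ Finset.range (r - 1), (k₀ + 1 - (i + 1)) with hN1
  have hc0 : ∏ i ∈ Finset.range (r - 1), ((k₀ : ℝ) - (i + 1)) = (N₀ : ℝ) := by
    rw [hN0, Nat.cast_prod]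
    refine Finset.prod_congr rfl fun i hi => ?_
    have hi' : i + 1 ≤ k₀ := by have := Finset.mem_range.mp hi; omega
    rw [Nat.cast_sub hi']; push_cast; ring
  have hc1 : ∏ i ∈ Finset.range (r - 1), ((↑(k₀ + 1) : ℝ) - (i + 1)) = (N₁ : ℝ) := by
    rw [hN1, Nat.cast_prod]
    refine Finset.prod_congr rfl fun i hi => ?_
    have hi' : i + 1 ≤ k₀ + 1 := by have := Finset.mem_range.mp hi; omega
    rw [Nat.cast_sub hi']; push_cast; ring
  rw [hc0, hc1] at h
  have hk0ne : ((k₀ : ℝ)) ≠ 0 := by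
    have : (0:ℕ) < k₀ := by omega
    exact_mod_cast this.ne'
  have hk1ne : ((↑(k₀ + 1) : ℝ)) ≠ 0 := by positivity
  have key : N₀ * (k₀ + 1) ^ (ℓ - 1) = N₁ * k₀ ^ (ℓ - 1) := by
    have h' : (N₀ : ℝ) * (↑(k₀ + 1)) ^ (ℓ - 1) = (N₁ : ℝ) * (k₀ : ℝ) ^ (ℓ - 1) := by
      field_simp at h
      push_cast at h ⊢
      linarith [h]
    exact_mod_cast h'
  have hcop : Nat.Coprime (k₀ ^ (ℓ - 1)) ((k₀ + 1) ^ (ℓ - 1)) := by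
    have : Nat.Coprime k₀ (k₀ + 1) := by simp
    exact Nat.Coprime.pow _ _ this
  have hdvd : k₀ ^ (ℓ - 1) ∣ N₀ :=
    hcop.dvd_of_dvd_mul_right ⟨N₁, by rw [key]; ring⟩
  have hpos : 0 < N₀ := by
    refine Finset.prod_pos fun i hi => ?_
    have := Finset.mem_range.mp hi; omega
  have hlt : N₀ < k₀ ^ (ℓ - 1) := by
    calc N₀ ≤ (k₀ - 1) ^ (r - 1) := by
          rw [hN0]
          have := Finset.prod_le_pow_card (Finset.range (r - 1))
            (fun i => k₀ - (i + 1)) (k₀ - 1) (fun i hi => by have := Finset.mem_range.mp hi; show k₀ - (i + 1) ≤ k₀ - 1; omega)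
          simpa using this
      _ < k₀ ^ (r - 1) := Nat.pow_lt_pow_left (by omega) (by omega)
      _ ≤ k₀ ^ (ℓ - 1) := Nat.pow_le_pow_right (by omega) (by omega)
  exact absurd (Nat.le_of_dvd hpos hdvd) (not_le.mpr hlt)
end

section
/- For positive reals x ≠ y and integers k ≥ 2, define μ_d = (x+y)^d − x^d − y^d and ω_d = x^d + y^d − 2((x+y)/2)^d. Then ω_{k+1}/μ_{k+1} ≤ ω_k/μ_k. -/
lemma mu_pos_aux (x y : ℝ) (hx : 0 < x) (hy : 0 < y) (n : ℕ) :
    0 < (x + y) ^ (n + 2) - x ^ (n + 2) - y ^ (n + 2) := by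
  have hxs : x < x + y := by linarith
  have hys : y < x + y := by linarith
  have h1 : x ^ (n + 1) < (x + y) ^ (n + 1) :=
    pow_lt_pow_left₀ hxs hx.le (Nat.succ_ne_zero n)
  have h2 : y ^ (n + 1) < (x + y) ^ (n + 1) :=
    pow_lt_pow_left₀ hys hy.le (Nat.succ_ne_zero n)
  have e : (x + y) ^ (n + 2) = x * (x + y) ^ (n + 1) + y * (x + y) ^ (n + 1) := by ring
  have l1 : x ^ (n + 2) = x * x ^ (n + 1) := by ring
  have l2 : y ^ (n + 2) = y * y ^ (n + 1) := by ring
  nlinarith [mul_lt_mul_of_pos_left h1 hx, mul_lt_mul_of_pos_left h2 hy]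

lemma diff_sign_aux (x y : ℝ) (hx : 0 ≤ x) (hy : 0 ≤ y) (j : ℕ) :
    0 ≤ (x - y) * (x ^ j - y ^ j) := by
  rcases le_total x y with h | h
  · have hp := pow_le_pow_left₀ hx h j
    have h3 := mul_nonneg (a := y - x) (b := y ^ j - x ^ j) (by linarith) (by linarith)
    nlinarith [h3]
  · have hp := pow_le_pow_left₀ hy h j
    exact mul_nonneg (by linarith) (by linarith)

lemma R_nonneg_aux (x y : ℝ) (hx : 0 < x) (hy : 0 < y) (n : ℕ) :
    0 ≤ (x + y) * (x ^ (n + 2) + y ^ (n + 2))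
      + ((2 : ℝ) ^ (n + 2) - 2) * (x * y) * (x ^ (n + 1) + y ^ (n + 1))
      - (x + y) ^ (n + 3) := by
  induction n with
  | zero =>
    have h : (x + y) * (x ^ (0 + 2) + y ^ (0 + 2))
      + ((2 : ℝ) ^ (0 + 2) - 2) * (x * y) * (x ^ (0 + 1) + y ^ (0 + 1))
      - (x + y) ^ (0 + 3) = 0 := by norm_num; ring
    linarith
  | succ m ih =>
    have hsign : 0 ≤ (x - y) * (x ^ (m + 1) - y ^ (m + 1)) :=
      diff_sign_aux x y hx.le hy.le (m + 1)
    have hfac : (0 : ℝ) ≤ ((2 : ℝ) ^ (m + 3) - 2) * (x * y) / 2 := by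
      have h2 : (2 : ℝ) ≤ 2 ^ (m + 3) := by
        calc (2 : ℝ) = 2 ^ 1 := by norm_num
        _ ≤ 2 ^ (m + 3) := by
          apply pow_le_pow_right₀ (by norm_num)
          omega
      have hp := mul_pos hx hy
      apply div_nonneg _ (by norm_num)
      exact mul_nonneg (by linarith) hp.le
    have hterm : 0 ≤ ((2 : ℝ) ^ (m + 3) - 2) * (x * y) / 2
        * ((x - y) * (x ^ (m + 1) - y ^ (m + 1))) := mul_nonneg hfac hsign
    have hmul : 0 ≤ (x + y) * ((x + y) * (x ^ (m + 2) + y ^ (m + 2))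
      + ((2 : ℝ) ^ (m + 2) - 2) * (x * y) * (x ^ (m + 1) + y ^ (m + 1))
      - (x + y) ^ (m + 3)) :=
      mul_nonneg (by linarith) ih
    have key : (x + y) * (x ^ (m + 1 + 2) + y ^ (m + 1 + 2))
      + ((2 : ℝ) ^ (m + 1 + 2) - 2) * (x * y) * (x ^ (m + 1 + 1) + y ^ (m + 1 + 1))
      - (x + y) ^ (m + 1 + 3)
      = (x + y) * ((x + y) * (x ^ (m + 2) + y ^ (m + 2))
          + ((2 : ℝ) ^ (m + 2) - 2) * (x * y) * (x ^ (m + 1) + y ^ (m + 1))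
          - (x + y) ^ (m + 3))
        + ((2 : ℝ) ^ (m + 3) - 2) * (x * y) / 2
          * ((x - y) * (x ^ (m + 1) - y ^ (m + 1))) := by
      ring
    rw [key]
    linarith

/-- Monotonicity of the ratio `ω_d / μ_d` :
`ω_{k+1}/μ_{k+1} ≤ ω_k/μ_k` for `k ≥ 2`. -/
theorem ratio_monotone (x y : ℝ) (hx : 0 < x) (hy : 0 < y) (hxy : x ≠ y)
    (k : ℕ) (hk : 2 ≤ k) :
    (x ^ (k + 1) + y ^ (k + 1) - 2 * ((x + y) / 2) ^ (k + 1)) /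
      ((x + y) ^ (k + 1) - x ^ (k + 1) - y ^ (k + 1)) ≤
    (x ^ k + y ^ k - 2 * ((x + y) / 2) ^ k) / ((x + y) ^ k - x ^ k - y ^ k) := by
  obtain ⟨n, rfl⟩ : ∃ n, k = n + 2 := ⟨k - 2, by omega⟩
  have hmu1 : 0 < (x + y) ^ (n + 2) - x ^ (n + 2) - y ^ (n + 2) :=
    mu_pos_aux x y hx hy n
  have hmu2 : 0 < (x + y) ^ (n + 2 + 1) - x ^ (n + 2 + 1) - y ^ (n + 2 + 1) :=
    mu_pos_aux x y hx hy (n + 1)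
  simp only [div_pow]
  rw [div_le_div_iff₀ hmu2 hmu1]
  have hR := R_nonneg_aux x y hx hy n
  have hpow : (0 : ℝ) ≤ (x + y) ^ (n + 2) / 2 ^ (n + 2) := by positivity
  have hprod : 0 ≤ (x + y) ^ (n + 2) / 2 ^ (n + 2)
      * ((x + y) * (x ^ (n + 2) + y ^ (n + 2))
        + ((2 : ℝ) ^ (n + 2) - 2) * (x * y) * (x ^ (n + 1) + y ^ (n + 1))
        - (x + y) ^ (n + 3)) := mul_nonneg hpow hR
  have h2a : ((2 : ℝ)) ^ (n + 2) ≠ 0 := by positivity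
  have h2b : ((2 : ℝ)) ^ (n + 2 + 1) ≠ 0 := by positivity
  have key : (x ^ (n + 2) + y ^ (n + 2) - 2 * ((x + y) ^ (n + 2) / 2 ^ (n + 2)))
        * ((x + y) ^ (n + 2 + 1) - x ^ (n + 2 + 1) - y ^ (n + 2 + 1))
      - (x ^ (n + 2 + 1) + y ^ (n + 2 + 1)
          - 2 * ((x + y) ^ (n + 2 + 1) / 2 ^ (n + 2 + 1)))
        * ((x + y) ^ (n + 2) - x ^ (n + 2) - y ^ (n + 2))
      = (x + y) ^ (n + 2) / 2 ^ (n + 2)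
        * ((x + y) * (x ^ (n + 2) + y ^ (n + 2))
          + ((2 : ℝ) ^ (n + 2) - 2) * (x * y) * (x ^ (n + 1) + y ^ (n + 1))
          - (x + y) ^ (n + 3)) := by
    field_simp
    ring
  linarith
end

section
/- For positive reals x ≠ y and positive integers a, b, s, t with b ≥ t ≥ s ≥ a ≥ 2 and C(b−a, 2) < a, one has μ_a · φ_{s,t} > ω_a · ψ_{s,t}, where μ_a = (x+y)^a − x^a − y^a, ω_a = x^a + y^a − 2((x+y)/2)^a, ψ_{s,t} = x^s y^t + x^t y^s, and φ_{s,t} = 2((x+y)/2)^{s+t} − x^s y^t − x^t y^s. -/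
/-!
Write `x = G e^u`, `y = G e^{-u}` with `u ≠ 0`, and `s + t = a + n`, `d = t - s`. After division
by `2 G^(2a+n) cosh^a u` the inequality reads
`(2^a - 2) cosh (d u) < ((2 cosh u)^a - 2 cosh (a u)) cosh^n u`.
The factor `(2 cosh u)^a - 2 cosh (a u)` is `∑ C(a,k) cosh ((2k-a) u)` over `0 < k < a`.
As `w ↦ cosh √w` is convex, Jensen bounds it below by `(2^a - 2) cosh (√(a-2) u)`, because the
`C(a,k)`-weighted mean of `(2k-a)^2` over `0 < k < a` is at least `a - 2`. Convexity also makes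
`cosh √w` submultiplicative, strictly so at positive arguments, whence
`cosh (d u) < cosh (√(a-2) u) cosh^n u` as soon as `d^2 ≤ a - 2 + n`; this is what
`C(b-a, 2) < a` provides.
-/

open Real Finset

theorem Real.strictConvexOn_sinh_Ici : StrictConvexOn ℝ (Set.Ici 0) sinh := by
  refine strictConvexOn_of_deriv2_pos (convex_Ici 0) continuous_sinh.continuousOn fun x hx => ?_
  rw [interior_Ici, Set.mem_Ioi] at hx
  simpa [Real.deriv_sinh, Real.deriv_cosh] using hx

theorem Real.strictMonoOn_sinh_div_self : StrictMonoOn (fun v => sinh v / v) (Set.Ioi 0) := by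
  intro v hv w hw hvw
  simpa using Real.strictConvexOn_sinh_Ici.secant_strict_mono (Set.mem_Ici.2 le_rfl)
    (Set.mem_Ici_of_Ioi hv) (Set.mem_Ici_of_Ioi hw) (ne_of_gt hv) (ne_of_gt hw) hvw

noncomputable def coshSqrt (w : ℝ) : ℝ := cosh √w

theorem hasDerivAt_coshSqrt {w : ℝ} (hw : 0 < w) :
    HasDerivAt coshSqrt (sinh √w / √w / 2) w := by
  refine ((hasDerivAt_cosh √w).comp w (hasDerivAt_sqrt hw.ne')).congr_deriv ?_
  field_simp

theorem strictConvexOn_coshSqrt : StrictConvexOn ℝ (Set.Ici 0) coshSqrt := by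
  refine StrictMonoOn.strictConvexOn_of_deriv (convex_Ici 0)
    (continuous_cosh.comp_continuousOn continuous_sqrt.continuousOn) ?_
  rw [interior_Ici]
  intro v (hv : 0 < v) w (hw : 0 < w) hvw
  rw [(hasDerivAt_coshSqrt hv).deriv, (hasDerivAt_coshSqrt hw).deriv]
  exact div_lt_div_of_pos_right
    (strictMonoOn_sinh_div_self (sqrt_pos.2 hv) (sqrt_pos.2 hw) (sqrt_lt_sqrt hv.le hvw)) two_pos

theorem coshSqrt_sq (u : ℝ) : coshSqrt (u ^ 2) = cosh u := by
  rw [coshSqrt, sqrt_sq_eq_abs, cosh_abs]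

theorem coshSqrt_pos (w : ℝ) : 0 < coshSqrt w := cosh_pos _

theorem coshSqrt_le_coshSqrt {v w : ℝ} (hvw : v ≤ w) : coshSqrt v ≤ coshSqrt w := by
  rw [coshSqrt, coshSqrt, cosh_le_cosh, abs_of_nonneg (sqrt_nonneg _),
    abs_of_nonneg (sqrt_nonneg _)]
  exact sqrt_le_sqrt hvw

theorem coshSqrt_add_lt_mul {v w : ℝ} (hv : 0 < v) (hw : 0 < w) :
    coshSqrt (v + w) < coshSqrt v * coshSqrt w := by
  obtain ⟨p, hp, rfl⟩ : ∃ p, 0 < p ∧ p ^ 2 = v := ⟨√v, sqrt_pos.2 hv, sq_sqrt hv.le⟩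
  obtain ⟨q, hq, rfl⟩ : ∃ q, 0 < q ∧ q ^ 2 = w := ⟨√w, sqrt_pos.2 hw, sq_sqrt hw.le⟩
  have h := strictConvexOn_coshSqrt.2 (Set.mem_Ici.2 (sq_nonneg (p + q)))
    (Set.mem_Ici.2 (sq_nonneg (p - q))) (by nlinarith) one_half_pos one_half_pos (add_halves 1)
  rw [coshSqrt_sq, coshSqrt_sq,
    show p ^ 2 + q ^ 2 = (1 / 2 : ℝ) • (p + q) ^ 2 + (1 / 2 : ℝ) • (p - q) ^ 2 by
      simp only [smul_eq_mul]; ring]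
  refine h.trans_eq ?_
  simp only [smul_eq_mul, coshSqrt_sq, cosh_add, cosh_sub]
  ring

theorem coshSqrt_add_le_mul {v w : ℝ} (hv : 0 ≤ v) (hw : 0 ≤ w) :
    coshSqrt (v + w) ≤ coshSqrt v * coshSqrt w := by
  rcases hv.eq_or_lt with rfl | hv
  · simp [coshSqrt]
  rcases hw.eq_or_lt with rfl | hw
  · simp [coshSqrt]
  exact (coshSqrt_add_lt_mul hv hw).le

theorem coshSqrt_nat_mul_sq_lt_cosh_pow {u : ℝ} (hu : u ≠ 0) {n : ℕ} (hn : 2 ≤ n) :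
    coshSqrt (n * u ^ 2) < cosh u ^ n := by
  have hu2 : 0 < u ^ 2 := by positivity
  induction n, hn using Nat.le_induction with
  | base =>
    calc coshSqrt ((2 : ℕ) * u ^ 2) = coshSqrt (u ^ 2 + u ^ 2) := by push_cast; ring_nf
      _ < coshSqrt (u ^ 2) * coshSqrt (u ^ 2) := coshSqrt_add_lt_mul hu2 hu2
      _ = cosh u ^ 2 := by rw [coshSqrt_sq, sq]
  | succ n hn ih =>
    calc coshSqrt ((n + 1 : ℕ) * u ^ 2) = coshSqrt (n * u ^ 2 + u ^ 2) := by push_cast; ring_nf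
      _ < coshSqrt (n * u ^ 2) * coshSqrt (u ^ 2) :=
        coshSqrt_add_lt_mul (by positivity) hu2
      _ < cosh u ^ n * cosh u := by rw [coshSqrt_sq]; gcongr
      _ = cosh u ^ (n + 1) := (pow_succ _ _).symm

/-- `2 ^ a` times the expected value of `g` at time `a` of the simple random walk on `ℤ`. -/
noncomputable def walkSum (a : ℕ) (g : ℝ → ℝ) : ℝ :=
  ∑ k ∈ range (a + 1), (a.choose k : ℝ) * g (2 * k - a)

theorem walkSum_add (a : ℕ) (g h : ℝ → ℝ) :
    walkSum a (fun x => g x + h x) = walkSum a g + walkSum a h := by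
  simp only [walkSum, mul_add, sum_add_distrib]

theorem walkSum_const_mul (a : ℕ) (c : ℝ) (g : ℝ → ℝ) :
    walkSum a (fun x => c * g x) = c * walkSum a g := by
  simp only [walkSum, mul_sum, mul_left_comm]

theorem walkSum_one (a : ℕ) : walkSum a (fun _ => 1) = 2 ^ a := by
  simp only [walkSum, mul_one]
  exact_mod_cast Nat.sum_range_choose a

theorem walkSum_succ (a : ℕ) (g : ℝ → ℝ) :
    walkSum (a + 1) g = walkSum a (fun x => g (x - 1) + g (x + 1)) := by
  have hcast : ∀ {n k : ℕ}, k ∈ range (n + 1) → ((n - k : ℕ) : ℝ) = n - k := fun hk =>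
    Nat.cast_sub (Nat.lt_succ_iff.1 (mem_range.1 hk))
  calc walkSum (a + 1) g
      = ∑ k ∈ range (a + 2), ((a + 1).choose k : ℝ) * g (k - (a + 1 - k : ℕ)) :=
        sum_congr rfl fun k hk => by rw [hcast hk]; push_cast; ring_nf
    _ = ∑ k ∈ range (a + 1), (a.choose k : ℝ) * g (k - (a + 1 - k : ℕ)) +
          ∑ k ∈ range (a + 1), (a.choose k : ℝ) * g ((k + 1 : ℕ) - (a - k : ℕ)) :=
        sum_choose_succ_mul (fun i j => g ((i : ℝ) - j)) a
    _ = walkSum a (fun x => g (x - 1) + g (x + 1)) := by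
        rw [walkSum, ← sum_add_distrib]
        refine sum_congr rfl fun k hk => ?_
        rw [hcast hk, hcast (mem_range.2 (Nat.lt_succ_of_lt (mem_range.1 hk)))]
        push_cast; ring_nf

theorem walkSum_sq (a : ℕ) : walkSum a (fun x => x ^ 2) = a * 2 ^ a := by
  induction a with
  | zero => simp [walkSum]
  | succ a ih =>
    have h : (fun x : ℝ => (x - 1) ^ 2 + (x + 1) ^ 2) = fun x => 2 * x ^ 2 + 2 * 1 := by
      funext x; ring
    rw [walkSum_succ, h, walkSum_add, walkSum_const_mul, walkSum_const_mul, ih, walkSum_one]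
    push_cast; ring

theorem walkSum_cosh (a : ℕ) (u : ℝ) : walkSum a (fun x => cosh (x * u)) = (2 * cosh u) ^ a := by
  induction a with
  | zero => simp [walkSum]
  | succ a ih =>
    have h : (fun x => cosh ((x - 1) * u) + cosh ((x + 1) * u)) =
        fun x => 2 * cosh u * cosh (x * u) := by
      funext x; rw [sub_mul, add_mul, one_mul, cosh_sub, cosh_add]; ring
    rw [walkSum_succ, h, walkSum_const_mul, ih, pow_succ]
    ring

theorem walkSum_eq_add_sum_Ico {a : ℕ} (ha : 1 ≤ a) (g : ℝ → ℝ) :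
    walkSum a g = g (-a) + ∑ k ∈ Ico 1 a, (a.choose k : ℝ) * g (2 * k - a) + g a := by
  rw [walkSum, sum_range_succ, range_eq_Ico, sum_eq_sum_Ico_succ_bot (by omega)]
  simp only [Nat.choose_zero_right, Nat.choose_self, Nat.cast_zero, Nat.cast_one, one_mul, zero_add]
  ring_nf

theorem two_mul_le_two_pow (n : ℕ) : 2 * n ≤ 2 ^ n := by
  cases n with
  | zero => norm_num
  | succ n => rw [pow_succ]; have := n.lt_two_pow_self; omega

theorem sq_add_two_le_two_pow_add {a : ℕ} (ha : 1 ≤ a) : a ^ 2 + 2 ≤ 2 ^ a + a := by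
  induction a, ha using Nat.le_induction with
  | base => norm_num
  | succ a _ ih =>
    have := two_mul_le_two_pow a
    rw [show (a + 1) ^ 2 = a ^ 2 + 2 * a + 1 by ring, pow_succ 2 a]
    omega

theorem two_pow_sub_two_pos {a : ℕ} (ha : 2 ≤ a) : (0 : ℝ) < 2 ^ a - 2 := by
  have : (2 : ℝ) ^ 2 ≤ 2 ^ a := pow_le_pow_right₀ one_le_two ha
  linarith

theorem two_pow_sub_two_mul_coshSqrt_le {a : ℕ} (ha : 2 ≤ a) (u : ℝ) :
    (2 ^ a - 2) * coshSqrt ((a - 2) * u ^ 2) ≤ (2 * cosh u) ^ a - 2 * cosh (a * u) := by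
  have hmid (g : ℝ → ℝ) := walkSum_eq_add_sum_Ico (by omega : 1 ≤ a) g
  have hw : ∑ k ∈ Ico 1 a, (a.choose k : ℝ) = 2 ^ a - 2 := by
    have := hmid fun _ => 1
    simp only [mul_one, walkSum_one] at this
    linarith
  have hwp : ∑ k ∈ Ico 1 a, (a.choose k : ℝ) * ((2 * k - a) * u) ^ 2 =
      (a * 2 ^ a - 2 * a ^ 2) * u ^ 2 := by
    have := hmid fun x => u ^ 2 * x ^ 2
    rw [walkSum_const_mul, walkSum_sq] at this
    simp only [mul_pow, mul_comm _ (u ^ 2)] at this ⊢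
    linear_combination -this
  have hwg : ∑ k ∈ Ico 1 a, (a.choose k : ℝ) * coshSqrt (((2 * k - a) * u) ^ 2) =
      (2 * cosh u) ^ a - 2 * cosh (a * u) := by
    have := hmid fun x => cosh (x * u)
    simp only [walkSum_cosh, neg_mul, cosh_neg] at this
    simp only [coshSqrt_sq]
    linarith
  have hpos := two_pow_sub_two_pos ha
  have hJ := strictConvexOn_coshSqrt.convexOn.map_centerMass_le
    (t := Ico 1 a) (w := fun k => (a.choose k : ℝ)) (p := fun k => ((2 * k - a) * u) ^ 2)
    (fun _ _ => Nat.cast_nonneg _) (hw ▸ hpos) (fun _ _ => Set.mem_Ici.2 (sq_nonneg _))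
  simp only [centerMass, smul_eq_mul, Function.comp_apply, hw, hwp, hwg] at hJ
  have hmean : (a - 2) * u ^ 2 ≤ (2 ^ a - 2)⁻¹ * ((a * 2 ^ a - 2 * a ^ 2) * u ^ 2) := by
    have h := sq_add_two_le_two_pow_add (by omega : 1 ≤ a)
    have h' : (a : ℝ) ^ 2 + 2 ≤ 2 ^ a + a := by exact_mod_cast h
    rw [inv_mul_eq_div, le_div_iff₀ hpos]
    nlinarith [mul_nonneg (sq_nonneg u) (sub_nonneg.2 h')]
  calc (2 ^ a - 2) * coshSqrt ((a - 2) * u ^ 2)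
      ≤ (2 ^ a - 2) * ((2 ^ a - 2)⁻¹ * ((2 * cosh u) ^ a - 2 * cosh (a * u))) := by
        gcongr
        exact (coshSqrt_le_coshSqrt hmean).trans hJ
    _ = (2 * cosh u) ^ a - 2 * cosh (a * u) := by field_simp

theorem two_pow_sub_two_mul_cosh_lt {u d : ℝ} (hu : u ≠ 0) {a n : ℕ} (ha : 2 ≤ a) (hn : 2 ≤ n)
    (hd : d ^ 2 + 2 ≤ a + n) :
    (2 ^ a - 2) * cosh (d * u) < ((2 * cosh u) ^ a - 2 * cosh (a * u)) * cosh u ^ n := by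
  have hpos := two_pow_sub_two_pos ha
  have ha' : (0 : ℝ) ≤ a - 2 := by rw [sub_nonneg]; exact_mod_cast ha
  have hdu : (d * u) ^ 2 ≤ (a - 2) * u ^ 2 + n * u ^ 2 := by nlinarith [sq_nonneg u]
  calc (2 ^ a - 2) * cosh (d * u)
      = (2 ^ a - 2) * coshSqrt ((d * u) ^ 2) := by rw [coshSqrt_sq]
    _ ≤ (2 ^ a - 2) * (coshSqrt ((a - 2) * u ^ 2) * coshSqrt (n * u ^ 2)) := by
        gcongr
        exact (coshSqrt_le_coshSqrt hdu).trans (coshSqrt_add_le_mul (by positivity) (by positivity))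
    _ < (2 ^ a - 2) * (coshSqrt ((a - 2) * u ^ 2) * cosh u ^ n) := by
        gcongr
        · exact coshSqrt_pos _
        · exact coshSqrt_nat_mul_sq_lt_cosh_pow hu hn
    _ ≤ ((2 * cosh u) ^ a - 2 * cosh (a * u)) * cosh u ^ n := by
        rw [← mul_assoc]
        gcongr
        exact two_pow_sub_two_mul_coshSqrt_le ha u

theorem exists_eq_mul_exp_and_eq_mul_exp_neg {x y : ℝ} (hx : 0 < x) (hy : 0 < y) :
    ∃ G u, 0 < G ∧ x = G * exp u ∧ y = G * exp (-u) := by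
  refine ⟨exp ((log x + log y) / 2), (log x - log y) / 2, exp_pos _, ?_, ?_⟩ <;>
    rw [← exp_add]
  · nth_rewrite 1 [← exp_log hx]; ring_nf
  · nth_rewrite 1 [← exp_log hy]; ring_nf

theorem mul_exp_add_mul_exp_neg (G u : ℝ) : G * exp u + G * exp (-u) = 2 * G * cosh u := by
  rw [cosh_eq]; ring

theorem mul_exp_pow_mul_add_eq_cosh (G u : ℝ) (s t : ℕ) :
    (G * exp u) ^ s * (G * exp (-u)) ^ t + (G * exp u) ^ t * (G * exp (-u)) ^ s =
      2 * G ^ (s + t) * cosh ((t - s) * u) := by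
  simp only [mul_pow, ← exp_nat_mul, cosh_eq, pow_add]
  have h₁ : exp (s * u) * exp (t * -u) = exp (-((t - s) * u)) := by rw [← exp_add]; ring_nf
  have h₂ : exp (t * u) * exp (s * -u) = exp ((t - s) * u) := by rw [← exp_add]; ring_nf
  linear_combination (G ^ s * G ^ t) * (h₁ + h₂)

theorem sq_add_two_le_of_choose_two_lt {d a : ℕ} (h : d.choose 2 < a) :
    (d : ℝ) ^ 2 + 2 ≤ 2 * a + d := by
  have h' : (d.choose 2 : ℝ) + 1 ≤ a := by exact_mod_cast h
  rw [Nat.cast_choose_two] at h'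
  linarith

/-- For distinct positive reals `x ≠ y` and integers `b ≥ t ≥ s ≥ a ≥ 2` with
`C(b−a,2) < a`, one has `μ_a · φ_{s,t} > ω_a · ψ_{s,t}`. -/
theorem mu_phi_gt_omega_psi (x y : ℝ) (hx : 0 < x) (hy : 0 < y) (hxy : x ≠ y)
    (a b s t : ℕ) (ha : 2 ≤ a) (has : a ≤ s) (hst : s ≤ t) (htb : t ≤ b)
    (hab : Nat.choose (b - a) 2 < a) :
    ((x + y) ^ a - x ^ a - y ^ a) *
      (2 * ((x + y) / 2) ^ (s + t) - x ^ s * y ^ t - x ^ t * y ^ s) >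
    (x ^ a + y ^ a - 2 * ((x + y) / 2) ^ a) * (x ^ s * y ^ t + x ^ t * y ^ s) := by
  obtain ⟨G, u, hG, rfl, rfl⟩ := exists_eq_mul_exp_and_eq_mul_exp_neg hx hy
  have hu : u ≠ 0 := by rintro rfl; simp at hxy
  obtain ⟨n, hn⟩ : ∃ n, s + t = a + n := ⟨s + t - a, by omega⟩
  have hd : ((t : ℝ) - s) ^ 2 + 2 ≤ a + n := by
    have h := sq_add_two_le_of_choose_two_lt
      ((Nat.choose_le_choose 2 (by omega : t - s ≤ b - a)).trans_lt hab)
    have hn' : (s : ℝ) + t = a + n := by exact_mod_cast hn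
    push_cast [Nat.cast_sub hst] at h
    linarith [(Nat.cast_le (α := ℝ)).2 has]
  have hcore := two_pow_sub_two_mul_cosh_lt hu ha (by omega) hd
  have hψ := mul_exp_pow_mul_add_eq_cosh G u s t
  have hω := mul_exp_pow_mul_add_eq_cosh G u 0 a
  simp only [pow_zero, one_mul, mul_one, zero_add, Nat.cast_zero, sub_zero] at hω
  rw [sub_sub _ (_ ^ s * _), hψ, mul_exp_add_mul_exp_neg, sub_sub, add_comm (_ ^ a), hω]
  have hpos : 0 < 2 * G ^ (2 * a + n) * cosh u ^ a := by positivity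
  rw [hn, gt_iff_lt]
  linear_combination mul_lt_mul_of_pos_left hcore hpos
end

section
/- For positive reals x, y and integers a ≥ 2, one has 2^{a−2}((x+y)^a − x^a − y^a) ≥ (2^a − 2) x y (x+y)^{a−2}. -/
lemma aux_pow (x y : ℝ) (hx : 0 ≤ x) (hy : 0 ≤ y) :
    ∀ n : ℕ, (x + y) ^ (n + 1) ≤ 2 ^ n * (x ^ (n + 1) + y ^ (n + 1)) := by
  intro n
  induction n with
  | zero => simp
  | succ n ih =>
    have h1 : (x + y) ^ (n + 2) ≤ 2 ^ n * (x ^ (n + 1) + y ^ (n + 1)) * (x + y) := by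
      calc (x + y) ^ (n + 2) = (x + y) ^ (n + 1) * (x + y) := by ring
        _ ≤ 2 ^ n * (x ^ (n + 1) + y ^ (n + 1)) * (x + y) :=
          mul_le_mul_of_nonneg_right ih (by linarith)
    have h2 : (x - y) * (x ^ (n + 1) - y ^ (n + 1)) ≥ 0 := by
      rcases le_total x y with h | h
      · have := pow_le_pow_left₀ hx h (n + 1)
        nlinarith
      · have := pow_le_pow_left₀ hy h (n + 1)
        nlinarith
    have ex : x ^ (n + 2) = x ^ (n + 1) * x := by ring
    have ey : y ^ (n + 2) = y ^ (n + 1) * y := by ring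
    have h3 : (x ^ (n + 1) + y ^ (n + 1)) * (x + y) ≤ 2 * (x ^ (n + 2) + y ^ (n + 2)) := by
      rw [ex, ey]; nlinarith [h2]
    calc (x + y) ^ (n + 2) ≤ 2 ^ n * ((x ^ (n + 1) + y ^ (n + 1)) * (x + y)) := by
          linarith [h1, mul_assoc ((2:ℝ)^n) (x ^ (n + 1) + y ^ (n + 1)) (x + y)]
      _ ≤ 2 ^ n * (2 * (x ^ (n + 2) + y ^ (n + 2))) :=
          mul_le_mul_of_nonneg_left h3 (by positivity)
      _ = 2 ^ (n + 1) * (x ^ (n + 2) + y ^ (n + 2)) := by ring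

/-- For positive reals `x, y` and integers `a ≥ 2`:
`2^{a−2}((x+y)^a − x^a − y^a) ≥ (2^a − 2) x y (x+y)^{a−2}`. -/
theorem power_sum_lower_bound (x y : ℝ) (hx : 0 < x) (hy : 0 < y)
    (a : ℕ) (ha : 2 ≤ a) :
    (2 : ℝ) ^ (a - 2) * ((x + y) ^ a - x ^ a - y ^ a) ≥
      (2 ^ a - 2) * (x * y) * (x + y) ^ (a - 2) := by
  obtain ⟨n, rfl⟩ := Nat.exists_eq_add_of_le ha
  simp only [Nat.add_sub_cancel_left]
  clear ha
  induction n with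
  | zero => norm_num; nlinarith
  | succ n ih =>
    have hs : 0 < x + y := by linarith
    -- rewrite all powers in terms of x^n, y^n, (x+y)^n, 2^n
    have ex : x ^ (2 + n) = x ^ 2 * x ^ n := pow_add x 2 n
    have ey : y ^ (2 + n) = y ^ 2 * y ^ n := pow_add y 2 n
    have es : (x + y) ^ (2 + n) = (x + y) ^ 2 * (x + y) ^ n := pow_add (x + y) 2 n
    have e2 : (2:ℝ) ^ (2 + n) = 2 ^ 2 * 2 ^ n := pow_add 2 2 n
    have ex' : x ^ (2 + (n + 1)) = x ^ 2 * x ^ n * x := by rw [pow_add, pow_succ]; ring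
    have ey' : y ^ (2 + (n + 1)) = y ^ 2 * y ^ n * y := by rw [pow_add, pow_succ]; ring
    have es' : (x + y) ^ (2 + (n + 1)) = (x + y) ^ 2 * (x + y) ^ n * (x + y) := by
      rw [pow_add, pow_succ]; ring
    have e2' : (2:ℝ) ^ (n + 1) = 2 ^ n * 2 := pow_succ 2 n
    have e2'' : (2:ℝ) ^ (2 + (n + 1)) = 2 ^ 2 * 2 ^ n * 2 := by rw [pow_add, pow_succ]; ring
    have esn : (x + y) ^ (n + 1) = (x + y) ^ n * (x + y) := pow_succ (x + y) n
    have exn : x ^ (n + 1) = x ^ n * x := pow_succ x n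
    have eyn : y ^ (n + 1) = y ^ n * y := pow_succ y n
    rw [ex, ey, es, e2] at ih
    rw [ex', ey', es', e2', e2'', esn]
    have haux := aux_pow x y hx.le hy.le n
    rw [esn, exn, eyn] at haux
    have h1 : (2:ℝ) * (x + y) * ((2 ^ 2 * 2 ^ n - 2) * (x * y) * (x + y) ^ n)
        ≤ (2:ℝ) * (x + y) * (2 ^ n * ((x + y) ^ 2 * (x + y) ^ n - x ^ 2 * x ^ n - y ^ 2 * y ^ n)) :=
      mul_le_mul_of_nonneg_left ih (by linarith)
    have h3 : (2:ℝ) * (x * y) * ((x + y) ^ n * (x + y)) ≤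
        (2:ℝ) * (x * y) * (2 ^ n * (x ^ n * x + y ^ n * y)) :=
      mul_le_mul_of_nonneg_left haux (by positivity)
    nlinarith [h1, h3]
end

section
/- Let t ≥ s ≥ 2 be integers with C(t−s, 2) ≤ s − 1. Then for all positive reals x, y with x ≠ y, 2((x+y)/2)^{s+t−2} > x^{s−1} y^{t−1} + x^{t−1} y^{s−1}. -/
/-!
Write `x = c (1 + u)`, `y = c (1 - u)` with `c = (x + y) / 2` and `0 < |u| < 1`. With `a = s - 1`
and `k = t - s` the right-hand side is `c ^ (2a + k) (1 - u²) ^ a ((1 + u) ^ k + (1 - u) ^ k)`.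
The bracket is twice the even part `∑ C(k, 2j) u^{2j}`, and `C(k, 2j) ≤ C(C(k, 2), j)` bounds it by
`2 (1 + u²) ^ C(k, 2) ≤ 2 (1 + u²) ^ a`; hence the right-hand side is at most
`2 c ^ (2a + k) (1 - u⁴) ^ a < 2 c ^ (2a + k)`.
-/

open Finset

namespace Nat

theorem choose_two_add_le (d j : ℕ) : d.choose 2 + j ≤ (d + 2 * j).choose 2 := by
  induction j with
  | zero => simp
  | succ p ih =>
    have step (n : ℕ) : (n + 1).choose 2 = n + n.choose 2 := by
      rw [choose_succ_succ', choose_one_right]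
    rw [show d + 2 * (p + 1) = d + 2 * p + 1 + 1 by ring, step, step]
    omega

theorem choose_two_mul_two (n : ℕ) : n.choose 2 * 2 = n * (n - 1) := by
  simpa using choose_succ_right_eq n 1

/-- With `q = k - 2j` and `m = C(k, 2)`, the ratio `C(k, 2j + 2) / C(k, 2j) = C(q, 2) / C(2j + 2, 2)`
is at most `(m - j) / (j + 1) = C(m, j + 1) / C(m, j)`, because `C(q, 2) + j ≤ m`. -/
theorem choose_two_mul_le_choose_choose_two (k j : ℕ) :
    k.choose (2 * j) ≤ (k.choose 2).choose j := by
  induction j with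
  | zero => simp
  | succ p ih =>
    rcases lt_or_ge k (2 * p + 2) with hk | hk
    · rw [choose_eq_zero_of_lt (by omega)]; exact zero_le _
    set m := k.choose 2
    set q := k - 2 * p
    have hgap : q.choose 2 ≤ m - p := by
      have := choose_two_add_le q p
      rw [show q + 2 * p = k by omega] at this
      omega
    have hratio : k.choose (2 * p + 2) * ((2 * p + 2) * (2 * p + 1)) =
        k.choose (2 * p) * (q * (q - 1)) := by
      have e1 := choose_succ_right_eq k (2 * p)
      have e2 := choose_succ_right_eq k (2 * p + 1)
      rw [show k - (2 * p + 1) = q - 1 by omega] at e2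
      calc _ = k.choose (2 * p + 1 + 1) * (2 * p + 1 + 1) * (2 * p + 1) := by ring
        _ = k.choose (2 * p + 1) * (2 * p + 1) * (q - 1) := by rw [e2]; ring
        _ = _ := by rw [e1]; ring
    have hm := choose_succ_right_eq m p
    refine le_of_mul_le_mul_right (a := (2 * p + 2) * (2 * p + 1)) ?_ (by positivity)
    calc k.choose (2 * (p + 1)) * ((2 * p + 2) * (2 * p + 1))
        = k.choose (2 * p) * (q.choose 2 * 2) := by rw [choose_two_mul_two, ← hratio]; ring_nf
      _ ≤ m.choose p * ((m - p) * 2) := by gcongr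
      _ = m.choose (p + 1) * ((p + 1) * 2) := by rw [← mul_assoc, ← hm]; ring
      _ ≤ m.choose (p + 1) * ((2 * p + 2) * (2 * p + 1)) := mul_le_mul_left _ (by nlinarith)

end Nat

theorem Finset.sum_range_two_mul {M : Type*} [AddCommMonoid M] (f : ℕ → M) (n : ℕ) :
    ∑ i ∈ range (2 * n), f i = ∑ j ∈ range n, (f (2 * j) + f (2 * j + 1)) := by
  induction n with
  | zero => simp
  | succ n ih =>
    rw [show 2 * (n + 1) = 2 * n + 1 + 1 by ring, sum_range_succ, sum_range_succ, sum_range_succ,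
      ih, add_assoc]

section

variable {R : Type*}

theorem one_add_pow_add_one_sub_pow [CommRing R] (k : ℕ) (u : R) :
    (1 + u) ^ k + (1 - u) ^ k = 2 * ∑ j ∈ range (k + 1), k.choose (2 * j) * (u ^ 2) ^ j := by
  have hterm (i : ℕ) : u ^ i * k.choose i + (-u) ^ i * k.choose i =
      (1 + (-1) ^ i) * u ^ i * k.choose i := by
    rw [neg_pow]; ring
  rw [add_comm 1 u, sub_eq_neg_add, add_pow, add_pow, ← sum_add_distrib]
  simp only [one_pow, mul_one, hterm]
  rw [sum_subset (range_subset_range.2 (by omega : k + 1 ≤ 2 * (k + 1))) fun i _ hi => by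
    rw [Nat.choose_eq_zero_of_lt (by simpa using hi)]; simp, sum_range_two_mul, mul_sum]
  refine sum_congr rfl fun j _ => ?_
  simp only [pow_succ, pow_mul]
  ring

theorem sum_range_choose_mul_pow_le [CommSemiring R] [PartialOrder R] [IsOrderedRing R]
    (m N : ℕ) {v : R} (hv : 0 ≤ v) : ∑ j ∈ range N, m.choose j * v ^ j ≤ (1 + v) ^ m := by
  calc ∑ j ∈ range N, m.choose j * v ^ j
      ≤ ∑ j ∈ range (N + (m + 1)), m.choose j * v ^ j :=
        sum_le_sum_of_subset_of_nonneg (range_subset_range.2 (by omega)) fun _ _ _ => by positivity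
    _ = ∑ j ∈ range (m + 1), m.choose j * v ^ j :=
        (sum_subset (range_subset_range.2 (by omega)) fun j _ hj => by
          rw [Nat.choose_eq_zero_of_lt (by simpa using hj)]; simp).symm
    _ = (1 + v) ^ m := by
        rw [add_comm 1 v, add_pow]
        simp only [one_pow, mul_one, mul_comm]

theorem one_add_pow_add_one_sub_pow_le [CommRing R] [LinearOrder R] [IsStrictOrderedRing R]
    (k : ℕ) (u : R) : (1 + u) ^ k + (1 - u) ^ k ≤ 2 * (1 + u ^ 2) ^ k.choose 2 := by
  rw [one_add_pow_add_one_sub_pow]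
  gcongr
  calc ∑ j ∈ range (k + 1), (k.choose (2 * j) : R) * (u ^ 2) ^ j
      ≤ ∑ j ∈ range (k + 1), ((k.choose 2).choose j : R) * (u ^ 2) ^ j := by
        gcongr with j
        exact_mod_cast Nat.choose_two_mul_le_choose_choose_two k j
    _ ≤ (1 + u ^ 2) ^ k.choose 2 := sum_range_choose_mul_pow_le _ _ (sq_nonneg u)

theorem one_add_pow_mul_one_sub_pow_add_lt_two [CommRing R] [LinearOrder R]
    [IsStrictOrderedRing R] {a k : ℕ} (ha : a ≠ 0) (hk : k.choose 2 ≤ a) {u : R} (hu0 : u ≠ 0)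
    (hu1 : |u| < 1) : (1 + u) ^ a * (1 - u) ^ (a + k) + (1 + u) ^ (a + k) * (1 - u) ^ a < 2 := by
  have hsq : 0 < u ^ 2 := by positivity
  have hsq1 : u ^ 2 < 1 := (sq_lt_one_iff_abs_lt_one u).2 hu1
  have hbound : (1 + u) ^ k + (1 - u) ^ k ≤ 2 * (1 + u ^ 2) ^ a :=
    (one_add_pow_add_one_sub_pow_le k u).trans (by gcongr; linarith)
  calc (1 + u) ^ a * (1 - u) ^ (a + k) + (1 + u) ^ (a + k) * (1 - u) ^ a
      = (1 - u ^ 2) ^ a * ((1 + u) ^ k + (1 - u) ^ k) := by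
        rw [show 1 - u ^ 2 = (1 + u) * (1 - u) by ring, mul_pow]; ring
    _ ≤ (1 - u ^ 2) ^ a * (2 * (1 + u ^ 2) ^ a) :=
      mul_le_mul_of_nonneg_left hbound (pow_nonneg (by linarith) a)
    _ = 2 * (1 - (u ^ 2) ^ 2) ^ a := by rw [← mul_left_comm, ← mul_pow]; ring
    _ < 2 := by
      have : (1 - (u ^ 2) ^ 2) ^ a < 1 := pow_lt_one₀ (by nlinarith) (by nlinarith) ha
      linarith

theorem pow_mul_pow_add_pow_mul_pow_lt_two_mul_average_pow [Field R] [LinearOrder R]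
    [IsStrictOrderedRing R] {a k : ℕ} (ha : a ≠ 0) (hk : k.choose 2 ≤ a) {x y : R} (hx : 0 < x)
    (hy : 0 < y) (hxy : x ≠ y) :
    x ^ a * y ^ (a + k) + x ^ (a + k) * y ^ a < 2 * ((x + y) / 2) ^ (2 * a + k) := by
  set c := (x + y) / 2 with hc_def
  set u := (x - y) / (x + y) with hu_def
  have hxc : x = c * (1 + u) := by rw [hc_def, hu_def]; field_simp; ring
  have hyc : y = c * (1 - u) := by rw [hc_def, hu_def]; field_simp; ring
  have hu0 : u ≠ 0 := div_ne_zero (sub_ne_zero.2 hxy) (by positivity)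
  have hu1 : |u| < 1 := by
    rw [abs_div, abs_of_pos (by positivity : 0 < x + y), div_lt_one (by positivity), abs_lt]
    constructor <;> linarith
  calc x ^ a * y ^ (a + k) + x ^ (a + k) * y ^ a
      = c ^ (2 * a + k) *
          ((1 + u) ^ a * (1 - u) ^ (a + k) + (1 + u) ^ (a + k) * (1 - u) ^ a) := by
        rw [hxc, hyc]; simp only [mul_pow]; ring
    _ < c ^ (2 * a + k) * 2 :=
        mul_lt_mul_of_pos_left (one_add_pow_mul_one_sub_pow_add_lt_two ha hk hu0 hu1) (by positivity)
    _ = 2 * c ^ (2 * a + k) := mul_comm _ _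

end

/-- For integers `t ≥ s ≥ 2` with `C(t−s,2) ≤ s−1` and distinct positive reals `x, y`:
`2((x+y)/2)^{s+t−2} > x^{s−1} y^{t−1} + x^{t−1} y^{s−1}`. -/
theorem sidorenko_type_inequality (s t : ℕ) (hs : 2 ≤ s) (hst : s ≤ t)
    (hC : Nat.choose (t - s) 2 ≤ s - 1)
    (x y : ℝ) (hx : 0 < x) (hy : 0 < y) (hxy : x ≠ y) :
    2 * ((x + y) / 2) ^ (s + t - 2) > x ^ (s - 1) * y ^ (t - 1) + x ^ (t - 1) * y ^ (s - 1) := by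
  obtain ⟨a, rfl⟩ : ∃ a, s = a + 1 := ⟨s - 1, by omega⟩
  obtain ⟨k, rfl⟩ := Nat.exists_eq_add_of_le hst
  rw [show a + 1 + (a + 1 + k) - 2 = 2 * a + k by omega, show a + 1 + k - 1 = a + k by omega,
    Nat.add_sub_cancel]
  rw [Nat.add_sub_cancel_left, Nat.add_sub_cancel] at hC
  exact pow_mul_pow_add_pow_mul_pow_lt_two_mul_average_pow (by omega) hC hx hy hxy
end

section
/- Let s ≤ t be integers with t ≥ s ≥ 1 and y = x − 1 ≥ 0, with s − 1 ≥ C(t−s, 2). Then h(x) = (s−1)x^{t−s+1} − (t−1)x^{t−s} + (t−1)x − s + 1 ≥ 0 for all real x ≥ 1. -/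
lemma pow_add_pow_le_one_add (x : ℝ) (hx : 1 ≤ x) (a b : ℕ) :
    x ^ a + x ^ b ≤ 1 + x ^ (a + b) := by
  have ha : (1:ℝ) ≤ x ^ a := one_le_pow₀ hx
  have hb : (1:ℝ) ≤ x ^ b := one_le_pow₀ hx
  rw [pow_add]
  nlinarith [mul_nonneg (sub_nonneg.2 ha) (sub_nonneg.2 hb)]

/-- `h(x) = (s−1)x^{t−s+1} − (t−1)x^{t−s} + (t−1)x − s + 1 ≥ 0` for all real `x ≥ 1`. -/
theorem h_nonneg (s t : ℕ) (hs : 1 ≤ s) (hst : s ≤ t)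
    (hC : Nat.choose (t - s) 2 ≤ s - 1)
    (x : ℝ) (hx : 1 ≤ x) :
    0 ≤ ((s : ℝ) - 1) * x ^ (t - s + 1) - ((t : ℝ) - 1) * x ^ (t - s)
        + ((t : ℝ) - 1) * x - (s : ℝ) + 1 := by
  set d := t - s with hd
  have hs1 : (1:ℝ) ≤ (s:ℝ) := by exact_mod_cast hs
  have htd : (t:ℝ) = (s:ℝ) + (d:ℝ) := by
    have : t = s + d := by omega
    exact_mod_cast this
  rcases Nat.eq_zero_or_pos d with hd0 | hd1
  · rw [hd0]
    rw [hd0] at htd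
    simp at htd
    rw [htd]
    norm_num
    nlinarith [mul_nonneg (sub_nonneg.2 hs1) (sub_nonneg.2 hx)]
  -- d ≥ 1
  have hdm : d - 1 + 1 = d := by omega
  set S : ℝ := ∑ j ∈ Finset.range (d - 1), x ^ (j + 1) with hS
  -- geometric sum identities
  have g1 : (x - 1) * (∑ i ∈ Finset.range (d + 1), x ^ i) = x ^ (d + 1) - 1 := by
    rw [mul_comm, geom_sum_mul]
  have g2 : (x - 1) * (∑ i ∈ Finset.range (d - 1), x ^ i) = x ^ (d - 1) - 1 := by
    rw [mul_comm, geom_sum_mul]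
  have hxS : S = x * ∑ i ∈ Finset.range (d - 1), x ^ i := by
    rw [Finset.mul_sum, hS]
    exact Finset.sum_congr rfl fun i _ => by ring
  have gS : (x - 1) * S = x ^ d - x := by
    rw [hxS]
    have : x ^ d = x * x ^ (d - 1) := by
      conv_lhs => rw [← hdm]
      ring
    rw [this]
    nlinarith [g2]
  have hG : (∑ i ∈ Finset.range (d + 1), x ^ i) = 1 + x ^ d + S := by
    rw [Finset.sum_range_succ]
    have : (∑ i ∈ Finset.range d, x ^ i) = 1 + S := by
      conv_lhs => rw [← hdm]
      rw [Finset.sum_range_succ']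
      simp [hS, add_comm]
    rw [this]; ring
  -- reflection bound: 2S ≤ (d-1)(1 + x^d)
  have hrefl : S = ∑ j ∈ Finset.range (d - 1), x ^ (d - 1 - j) := by
    rw [hS, ← Finset.sum_range_reflect (fun j => x ^ (j + 1)) (d - 1)]
    refine Finset.sum_congr rfl fun j hj => ?_
    have hj' : j < d - 1 := Finset.mem_range.mp hj
    congr 1
    omega
  have h2S : 2 * S ≤ ((d:ℝ) - 1) * (1 + x ^ d) := by
    have : 2 * S = ∑ j ∈ Finset.range (d - 1), (x ^ (j + 1) + x ^ (d - 1 - j)) := by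
      rw [Finset.sum_add_distrib, ← hS, ← hrefl]; ring
    rw [this]
    have hle : ∀ j ∈ Finset.range (d - 1),
        x ^ (j + 1) + x ^ (d - 1 - j) ≤ 1 + x ^ d := by
      intro j hj
      have hj' : j < d - 1 := Finset.mem_range.mp hj
      have h := pow_add_pow_le_one_add x hx (j + 1) (d - 1 - j)
      have : j + 1 + (d - 1 - j) = d := by omega
      rwa [this] at h
    calc ∑ j ∈ Finset.range (d - 1), (x ^ (j + 1) + x ^ (d - 1 - j))
        ≤ ∑ _j ∈ Finset.range (d - 1), (1 + x ^ d) := Finset.sum_le_sum hle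
      _ = ((d:ℝ) - 1) * (1 + x ^ d) := by
          rw [Finset.sum_const, Finset.card_range, nsmul_eq_mul]
          congr 1
          rw [Nat.cast_sub hd1, Nat.cast_one]
  -- numeric condition
  have hnum : (d:ℝ) * ((d:ℝ) - 1) ≤ 2 * ((s:ℝ) - 1) := by
    have h1 : d * (d - 1) ≤ 2 * (s - 1) := by
      have h2 : Nat.choose d 2 = d * (d - 1) / 2 := Nat.choose_two_right d
      have h3 : 2 ∣ d * (d - 1) := by
        rcases Nat.even_or_odd d with he | ho
        · exact Dvd.dvd.mul_right he.two_dvd _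
        · exact Dvd.dvd.mul_left (Nat.Odd.sub_odd ho odd_one).two_dvd _
      omega
    have h4 := (Nat.cast_le (α := ℝ)).mpr h1
    push_cast [Nat.cast_sub hd1, Nat.cast_sub hs] at h4
    linarith
  -- put it together
  have hkey : ((s : ℝ) - 1) * x ^ (d + 1) - ((t : ℝ) - 1) * x ^ d
      + ((t : ℝ) - 1) * x - (s : ℝ) + 1
      = (x - 1) * (((s:ℝ) - 1) * (1 + x ^ d + S) - ((t:ℝ) - 1) * S) := by
    have e1 : (x - 1) * (1 + x ^ d + S) = x ^ (d + 1) - 1 := by rw [← hG]; exact g1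
    nlinarith [e1, gS]
  rw [hkey, htd]
  have hq : 0 ≤ ((s:ℝ) - 1) * (1 + x ^ d + S) - ((s:ℝ) + (d:ℝ) - 1) * S := by
    have hSpos : 0 ≤ S := Finset.sum_nonneg fun j _ => by positivity
    have hxd : (1:ℝ) ≤ x ^ d := one_le_pow₀ hx
    have hd0' : (0:ℝ) ≤ (d:ℝ) := Nat.cast_nonneg d
    nlinarith [mul_le_mul_of_nonneg_left h2S hd0']
  have hx1 : (0:ℝ) ≤ x - 1 := by linarith
  exact mul_nonneg hx1 hq
end

section
/- Let ℓ > r ≥ 2 be integers and let m be the unique maximizer of f(k) = (k−1)_{r−1}/k^{ℓ−1} over integers k ≥ r. Then m < ℓ(ℓ−1)/(2(ℓ−r)). -/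
/-- Quadratic upper bound for `(1-x)^n` when `0 ≤ x ≤ 1`. -/
lemma bern_upper (n : ℕ) (x : ℝ) (h0 : 0 ≤ x) (h1 : x ≤ 1) :
    (1 - x) ^ n ≤ 1 - n * x + (n : ℝ) * ((n : ℝ) - 1) / 2 * x ^ 2 := by
  induction n with
  | zero => simp
  | succ n ih =>
    have hx : (0:ℝ) ≤ 1 - x := by linarith
    have hpow : (0:ℝ) ≤ (1 - x) ^ n := by positivity
    have hn : (0:ℝ) ≤ (n : ℝ) * ((n : ℝ) - 1) := by
      rcases Nat.eq_zero_or_pos n with h | h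
      · simp [h]
      · have : (1:ℝ) ≤ (n:ℝ) := by exact_mod_cast h
        nlinarith
    have h2 : (1 - x) ^ (n + 1) ≤ (1 - x) * (1 - n * x + (n : ℝ) * ((n : ℝ) - 1) / 2 * x ^ 2) := by
      rw [pow_succ, mul_comm]
      exact mul_le_mul_of_nonneg_left ih hx
    push_cast
    nlinarith [mul_nonneg hn (pow_nonneg h0 3), sq_nonneg x]

lemma prod_shift (x : ℝ) (n : ℕ) :
    (∏ i ∈ Finset.range n, (x - (i + 1))) * (x - (n + 1)) =
      (x - 1) * ∏ i ∈ Finset.range n, ((x - 1) - (i + 1)) := by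
  have h1 : (∏ i ∈ Finset.range n, (x - (i + 1))) * (x - (n + 1)) =
      ∏ i ∈ Finset.range (n + 1), (x - (i + 1)) := by
    rw [Finset.prod_range_succ]
  have h2 : ∏ i ∈ Finset.range (n + 1), (x - (i + 1)) =
      (∏ i ∈ Finset.range n, (x - (((i + 1 : ℕ) : ℝ) + 1))) * (x - (((0:ℕ):ℝ) + 1)) :=
    Finset.prod_range_succ' _ _
  rw [h1, h2]
  rw [mul_comm]
  congr 1
  · push_cast; ring
  · apply Finset.prod_congr rfl
    intro i _
    push_cast; ring

/-- Upper bound for the unique maximizer `m`: `m < ℓ(ℓ−1)/(2(ℓ−r))`. -/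
theorem m_upper_bound (r ℓ m : ℕ) (hr : 2 ≤ r) (hℓ : r < ℓ)
    (f : ℕ → ℝ)
    (hf : ∀ k, f k = (∏ i ∈ Finset.range (r - 1), ((k : ℝ) - (i + 1))) / (k : ℝ) ^ (ℓ - 1))
    (hm : r ≤ m ∧ ∀ k, r ≤ k → k ≠ m → f k < f m) :
    (m : ℝ) < (ℓ : ℝ) * ((ℓ : ℝ) - 1) / (2 * ((ℓ : ℝ) - (r : ℝ))) := by
  obtain ⟨hrm, hmax⟩ := hm
  have hℓr : (0:ℝ) < (ℓ:ℝ) - r := by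
    have : (r:ℝ) < ℓ := by exact_mod_cast hℓ
    linarith
  have hden : (0:ℝ) < 2 * ((ℓ:ℝ) - r) := by linarith
  rw [lt_div_iff₀ hden]
  have hr' : (2:ℝ) ≤ r := by exact_mod_cast hr
  have hℓ' : (r:ℝ) + 1 ≤ ℓ := by exact_mod_cast hℓ
  rcases eq_or_lt_of_le hrm with heq | hlt
  · -- m = r
    subst heq
    nlinarith
  · -- m > r
    set M : ℝ := (m:ℝ) with hM
    have hMr : (r:ℝ) + 1 ≤ M := by
      have h : r + 1 ≤ m := hlt
      rw [hM]
      exact_mod_cast h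
    have hM3 : (3:ℝ) ≤ M := by linarith
    have hM0 : (0:ℝ) < M := by linarith
    have hflt := hmax (m - 1) (by omega) (by omega)
    rw [hf, hf] at hflt
    have hcast : ((m - 1 : ℕ) : ℝ) = M - 1 := by
      have : 1 ≤ m := by omega
      push_cast [this]; ring
    rw [hcast] at hflt
    -- positivity of products
    have hPpos : 0 < ∏ i ∈ Finset.range (r - 1), (M - (i + 1)) := by
      apply Finset.prod_pos
      intro i hi
      have hi' : i + 1 ≤ r - 1 := Finset.mem_range.mp hi
      have : (i:ℝ) + 1 ≤ (r:ℝ) - 1 := by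
        have : (i + 1 : ℕ) ≤ r - 1 := hi'
        have h2 : ((i+1:ℕ):ℝ) ≤ ((r-1:ℕ):ℝ) := by exact_mod_cast this
        have h3 : ((r-1:ℕ):ℝ) = (r:ℝ) - 1 := by
          have : 1 ≤ r := by omega
          push_cast [this]; ring
        push_cast at h2; linarith [h3 ▸ h2]
      linarith
    have hP'pos : 0 < ∏ i ∈ Finset.range (r - 1), ((M - 1) - (i + 1)) := by
      apply Finset.prod_pos
      intro i hi
      have hi' : i + 1 ≤ r - 1 := Finset.mem_range.mp hi
      have : (i:ℝ) + 1 ≤ (r:ℝ) - 1 := by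
        have h2 : ((i+1:ℕ):ℝ) ≤ ((r-1:ℕ):ℝ) := by exact_mod_cast hi'
        have h3 : ((r-1:ℕ):ℝ) = (r:ℝ) - 1 := by
          have : 1 ≤ r := by omega
          push_cast [this]; ring
        push_cast at h2; linarith [h3 ▸ h2]
      linarith
    -- product identity
    have hid : (∏ i ∈ Finset.range (r - 1), (M - (i + 1))) * (M - r) =
        (M - 1) * ∏ i ∈ Finset.range (r - 1), ((M - 1) - (i + 1)) := by
      have := prod_shift M (r - 1)
      have hrc : ((r - 1 : ℕ) : ℝ) + 1 = (r : ℝ) := by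
        have : 1 ≤ r := by omega
        push_cast [this]; ring
      rw [hrc] at this
      exact this
    have hMpow : (0:ℝ) < M ^ (ℓ - 1) := by positivity
    have hM1 : (0:ℝ) < M - 1 := by linarith
    have hM1pow : (0:ℝ) < (M - 1) ^ (ℓ - 1) := pow_pos hM1 _
    rw [div_lt_div_iff₀ hM1pow hMpow] at hflt
    -- hflt : P' * M^(ℓ-1) < P * (M-1)^(ℓ-1)
    have hkey : (M - r) * M ^ (ℓ - 1) < (M - 1) ^ ℓ := by
      have hℓ1 : ℓ - 1 + 1 = ℓ := by omega
      have hstep : ((M - 1) * ∏ i ∈ Finset.range (r - 1), ((M - 1) - (i + 1))) * M ^ (ℓ - 1)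
          < (M - 1) * ((∏ i ∈ Finset.range (r - 1), (M - (i + 1))) * (M - 1) ^ (ℓ - 1)) := by
        have hM1 : (0:ℝ) < M - 1 := by linarith
        nlinarith [hflt, hM1]
      rw [← hid] at hstep
      have hP : 0 < ∏ i ∈ Finset.range (r - 1), (M - (i + 1)) := hPpos
      have : ((∏ i ∈ Finset.range (r - 1), (M - (i + 1))) * ((M - r) * M ^ (ℓ - 1)))
          < (∏ i ∈ Finset.range (r - 1), (M - (i + 1))) * ((M - 1) ^ (ℓ - 1) * (M - 1)) := by
        nlinarith [hstep]
      have := lt_of_mul_lt_mul_left this (le_of_lt hP)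
      calc (M - r) * M ^ (ℓ - 1) < (M - 1) ^ (ℓ - 1) * (M - 1) := this
        _ = (M - 1) ^ ℓ := by rw [← pow_succ, hℓ1]
    -- Bernoulli bound with x = 1/M
    have hB := bern_upper ℓ (1 / M) (by positivity) (by
      rw [div_le_one hM0]; linarith)
    have hq : ((M - 1) / M) ^ ℓ ≤ 1 - ℓ * (1/M) + (ℓ:ℝ) * ((ℓ:ℝ) - 1) / 2 * (1/M)^2 := by
      have : (M - 1) / M = 1 - 1 / M := by field_simp
      rw [this]; exact hB
    -- (M-1)^ℓ = ((M-1)/M)^ℓ * M^ℓ and M^ℓ = M * M^(ℓ-1)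
    have hMl : M ^ ℓ = M * M ^ (ℓ - 1) := by
      have hℓ1 : ℓ - 1 + 1 = ℓ := by omega
      conv_lhs => rw [← hℓ1]
      rw [pow_succ]; ring
    have hsplit : (M - 1) ^ ℓ = ((M - 1) / M) ^ ℓ * M ^ ℓ := by
      rw [div_pow]; field_simp
    -- combine
    have hcomb : (M - r) * M ^ (ℓ - 1) <
        (1 - ℓ * (1/M) + (ℓ:ℝ) * ((ℓ:ℝ) - 1) / 2 * (1/M)^2) * (M * M ^ (ℓ - 1)) := by
      calc (M - r) * M ^ (ℓ - 1) < (M - 1) ^ ℓ := hkey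
        _ = ((M - 1) / M) ^ ℓ * M ^ ℓ := hsplit
        _ ≤ (1 - ℓ * (1/M) + (ℓ:ℝ) * ((ℓ:ℝ) - 1) / 2 * (1/M)^2) * M ^ ℓ := by
            apply mul_le_mul_of_nonneg_right hq (by positivity)
        _ = (1 - ℓ * (1/M) + (ℓ:ℝ) * ((ℓ:ℝ) - 1) / 2 * (1/M)^2) * (M * M ^ (ℓ - 1)) := by
            rw [hMl]
    have hfin : M - r < (1 - ℓ * (1/M) + (ℓ:ℝ) * ((ℓ:ℝ) - 1) / 2 * (1/M)^2) * M := by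
      have := hcomb
      have h := lt_of_mul_lt_mul_right (by
        calc (M - r) * M ^ (ℓ - 1) < _ := hcomb
          _ = ((1 - ℓ * (1/M) + (ℓ:ℝ) * ((ℓ:ℝ) - 1) / 2 * (1/M)^2) * M) * M ^ (ℓ - 1) := by ring)
        (le_of_lt hMpow)
      exact h
    -- clear denominators: multiply by 2M
    have hM2 : (0:ℝ) < M^2 := by positivity
    have hexp : (1 - ℓ * (1/M) + (ℓ:ℝ) * ((ℓ:ℝ) - 1) / 2 * (1/M)^2) * M
        = M - ℓ + (ℓ:ℝ) * ((ℓ:ℝ) - 1) / (2 * M) := by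
      field_simp
    rw [hexp] at hfin
    -- hfin : M - r < M - ℓ + ℓ(ℓ-1)/(2M)
    have h2M : (0:ℝ) < 2 * M := by linarith
    have : ((ℓ:ℝ) - r) * (2 * M) < (ℓ:ℝ) * ((ℓ:ℝ) - 1) := by
      have h5 : (ℓ:ℝ) - r < (ℓ:ℝ) * ((ℓ:ℝ) - 1) / (2 * M) := by linarith
      calc ((ℓ:ℝ) - r) * (2 * M) < ((ℓ:ℝ) * ((ℓ:ℝ) - 1) / (2 * M)) * (2 * M) :=
            mul_lt_mul_of_pos_right h5 h2M
        _ = (ℓ:ℝ) * ((ℓ:ℝ) - 1) := by field_simp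
    calc (m:ℝ) * (2 * ((ℓ:ℝ) - r)) = ((ℓ:ℝ) - r) * (2 * M) := by rw [hM]; ring
      _ < (ℓ:ℝ) * ((ℓ:ℝ) - 1) := this
end

section
/- Let ℓ > r ≥ 2 be integers and m the unique maximizer of f(k) = (k−1)_{r−1}/k^{ℓ−1} over integers k ≥ r. Then m < rℓ²/(ℓ² − r²). -/
open Finset Real

private lemma prod_shift_aux (s : ℕ) (x : ℝ) :
    (x - 1 - s) * ∏ i ∈ Finset.range s, (x - (i + 1)) =
    (x - 1) * ∏ i ∈ Finset.range s, ((x - 1) - (i + 1)) := by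
  induction s with
  | zero => simp
  | succ n ih =>
    rw [Finset.prod_range_succ, Finset.prod_range_succ]
    push_cast
    push_cast at ih
    linear_combination (x - (n:ℝ) - 2) * ih

private lemma two_mul_le_exp_sub (y : ℝ) (hy : 0 ≤ y) :
    2 * y ≤ Real.exp y - Real.exp (-y) := by
  rcases eq_or_lt_of_le hy with h | h
  · simp [← h]
  · have := (Real.self_lt_sinh_iff (x := y)).2 h
    rw [Real.sinh_eq] at this
    linarith

private lemma exp_core (r ℓ : ℕ) (hr : 2 ≤ r) (hl : r < ℓ) :
    Real.exp (-((ℓ : ℝ) * (((ℓ : ℝ)^2 - (r : ℝ)^2) / ((r : ℝ) * (ℓ : ℝ)^2)))) ≤ (r : ℝ)^2 / (ℓ : ℝ)^2 := by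
  have hr0 : (0:ℝ) < r := by exact_mod_cast (by omega : 0 < r)
  have hl0 : (0:ℝ) < ℓ := by exact_mod_cast (by omega : 0 < ℓ)
  set y := Real.log ((ℓ : ℝ) / r) with hy
  have hy0 : 0 ≤ y := Real.log_nonneg (by rw [le_div_iff₀ hr0]; norm_num; exact_mod_cast hl.le)
  have hey : Real.exp y = (ℓ : ℝ) / r := Real.exp_log (by positivity)
  have heny : Real.exp (-y) = (r : ℝ) / ℓ := by
    rw [Real.exp_neg, hey]; field_simp
  have harg : (ℓ : ℝ) * (((ℓ : ℝ)^2 - (r : ℝ)^2) / ((r : ℝ) * (ℓ : ℝ)^2)) = Real.exp y - Real.exp (-y) := by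
    rw [hey, heny]; field_simp
  have h2y := two_mul_le_exp_sub y hy0
  calc Real.exp (-((ℓ : ℝ) * (((ℓ : ℝ)^2 - (r : ℝ)^2) / ((r : ℝ) * (ℓ : ℝ)^2))))
      ≤ Real.exp (-(2*y)) := by
        apply Real.exp_le_exp.2; rw [harg]; linarith
    _ = (r : ℝ)^2 / (ℓ : ℝ)^2 := by
        rw [show -(2*y) = (-y) + (-y) by ring, Real.exp_add, heny]; field_simp

private lemma key_ineq (r ℓ : ℕ) (a : ℝ) (hr : 2 ≤ r) (hl : r < ℓ)
    (ha : (r : ℝ) * (ℓ : ℝ)^2 / ((ℓ : ℝ)^2 - (r : ℝ)^2) ≤ a) :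
    (a - 1)^ℓ ≤ a^(ℓ-1) * (a - r) := by
  have hr0 : (0:ℝ) < r := by exact_mod_cast (by omega : 0 < r)
  have hl0 : (0:ℝ) < ℓ := by exact_mod_cast (by omega : 0 < ℓ)
  have hr2 : (2:ℝ) ≤ r := by exact_mod_cast hr
  have hrl : (r : ℝ) < ℓ := by exact_mod_cast hl
  have hd : (0:ℝ) < (ℓ : ℝ)^2 - (r : ℝ)^2 := by nlinarith
  set x₀ : ℝ := ((ℓ : ℝ)^2 - (r : ℝ)^2) / ((r : ℝ) * (ℓ : ℝ)^2) with hx₀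
  have hx₀0 : 0 < x₀ := by positivity
  have hB : (r : ℝ) * (ℓ : ℝ)^2 / ((ℓ : ℝ)^2 - (r : ℝ)^2) = 1 / x₀ := by
    rw [hx₀, one_div_div]
  have haB : 1 / x₀ ≤ a := by rw [← hB]; exact ha
  have ha0 : 0 < a := lt_of_lt_of_le (by positivity) haB
  have har : (r : ℝ) < a := by
    have : (r : ℝ) < (r : ℝ) * (ℓ : ℝ)^2 / ((ℓ : ℝ)^2 - (r : ℝ)^2) := by
      rw [lt_div_iff₀ hd]; nlinarith [mul_pos hr0 (mul_pos hr0 hr0)]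
    linarith
  have ha1 : 1 < a := by linarith
  set x : ℝ := 1 / a with hxdef
  have hx0 : 0 < x := by positivity
  have hxx₀ : x ≤ x₀ := by
    rw [hxdef, div_le_iff₀ ha0]
    rw [div_le_iff₀ hx₀0] at haB
    linarith [mul_comm a x₀]
  set lam : ℝ := x / x₀ with hlam
  have hlam0 : 0 ≤ lam := by positivity
  have hlam1 : lam ≤ 1 := by rw [hlam, div_le_one hx₀0]; exact hxx₀
  -- step 1 : (1-x)^ℓ ≤ exp (-(ℓ*x))
  have hx1 : x < 1 := by rw [hxdef]; rw [div_lt_one ha0]; exact ha1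
  have step1 : (1 - x)^ℓ ≤ Real.exp (-((ℓ:ℝ) * x)) := by
    have h1 : 1 - x ≤ Real.exp (-x) := by linarith [Real.add_one_le_exp (-x)]
    calc (1 - x)^ℓ ≤ (Real.exp (-x))^ℓ := pow_le_pow_left₀ (by linarith) h1 ℓ
      _ = Real.exp (-((ℓ:ℝ) * x)) := by rw [← Real.exp_nat_mul]; ring_nf
  -- step 2 : exp(-(ℓ*x)) ≤ 1 - r*x
  have hconv := convexOn_exp.2 (Set.mem_univ 0) (Set.mem_univ (-((ℓ:ℝ) * x₀)))
      (by linarith : (0:ℝ) ≤ 1 - lam) hlam0 (by ring)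
  have hlx : lam * x₀ = x := by
    rw [hlam]; exact div_mul_cancel₀ x hx₀0.ne'
  have hxs : (1 - lam) • (0:ℝ) + lam • (-((ℓ:ℝ) * x₀)) = -((ℓ:ℝ) * x) := by
    rw [smul_eq_mul, smul_eq_mul, mul_zero, zero_add]
    linear_combination (-(ℓ:ℝ)) * hlx
  rw [hxs] at hconv
  simp only [smul_eq_mul, Real.exp_zero, mul_one] at hconv
  have hcore := exp_core r ℓ hr hl
  rw [← hx₀] at hcore
  have hrx₀ : (r : ℝ) * x₀ = 1 - (r:ℝ)^2/(ℓ:ℝ)^2 := by rw [hx₀]; field_simp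
  have step2 : Real.exp (-((ℓ:ℝ) * x)) ≤ 1 - (r:ℝ) * x := by
    have : Real.exp (-((ℓ:ℝ) * x)) ≤ (1 - lam) + lam * ((r:ℝ)^2/(ℓ:ℝ)^2) := by
      refine hconv.trans ?_
      have := mul_le_mul_of_nonneg_left hcore hlam0
      linarith
    have h2 : (1 - lam) + lam * ((r:ℝ)^2/(ℓ:ℝ)^2) = 1 - lam * ((r:ℝ) * x₀) := by
      rw [hrx₀]; ring
    rw [h2] at this
    have : 1 - lam * ((r:ℝ) * x₀) = 1 - (r:ℝ) * x := by rw [← hlx]; ring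
    linarith [hconv, this]
  -- combine
  have hfin : (1 - x)^ℓ ≤ 1 - (r:ℝ) * x := step1.trans step2
  have hmul := mul_le_mul_of_nonneg_left hfin (le_of_lt (pow_pos ha0 ℓ))
  have e1 : a^ℓ * (1 - x)^ℓ = (a - 1)^ℓ := by
    rw [← mul_pow]; congr 1; rw [hxdef]; field_simp
  have e2 : a^ℓ * (1 - (r:ℝ) * x) = a^(ℓ-1) * (a - r) := by
    have hpow : a^ℓ = a^(ℓ-1) * a := by
      rw [← pow_succ]; congr 1; omega
    rw [hpow, hxdef]; field_simp
  rw [e1, e2] at hmul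
  exact hmul

/-- Upper bound for the unique maximizer `m`: `m < rℓ²/(ℓ² − r²)`. -/
theorem m_upper_bound_sharp (r ℓ m : ℕ) (hr : 2 ≤ r) (hℓ : r < ℓ)
    (f : ℕ → ℝ)
    (hf : ∀ k, f k = (∏ i ∈ Finset.range (r - 1), ((k : ℝ) - (i + 1))) / (k : ℝ) ^ (ℓ - 1))
    (hm : r ≤ m ∧ ∀ k, r ≤ k → k ≠ m → f k < f m) :
    (m : ℝ) < (r : ℝ) * (ℓ : ℝ) ^ 2 / ((ℓ : ℝ) ^ 2 - (r : ℝ) ^ 2) := by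
  by_contra hcon
  push_neg at hcon
  have hrl : (r : ℝ) < ℓ := by exact_mod_cast hℓ
  have hr2 : (2:ℝ) ≤ r := by exact_mod_cast hr
  have hd : (0:ℝ) < (ℓ : ℝ)^2 - (r : ℝ)^2 := by nlinarith
  have har : (r : ℝ) < m := by
    have : (r : ℝ) < (r : ℝ) * (ℓ : ℝ)^2 / ((ℓ : ℝ)^2 - (r : ℝ)^2) := by
      rw [lt_div_iff₀ hd]; nlinarith
    linarith
  have hmN : r < m := by exact_mod_cast har
  set a : ℝ := (m : ℝ) with hadef
  have key := key_ineq r ℓ a hr hℓ hcon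
  have ha0 : (0:ℝ) < a := lt_trans (by positivity) har
  have ha1 : (0:ℝ) < a - 1 := by linarith
  have harr : (0:ℝ) < a - r := by linarith
  have hcast : ((m - 1 : ℕ) : ℝ) = a - 1 := by
    rw [hadef, Nat.cast_sub (by omega : 1 ≤ m)]; norm_num
  set Pa : ℝ := ∏ i ∈ Finset.range (r - 1), (a - (i + 1)) with hPadef
  set Pb : ℝ := ∏ i ∈ Finset.range (r - 1), ((a - 1) - (i + 1)) with hPbdef
  have hPb : 0 < Pb := by
    rw [hPbdef]
    apply Finset.prod_pos
    intro i hi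
    simp only [Finset.mem_range] at hi
    have h1 : (i : ℝ) + 1 ≤ (r : ℝ) - 1 := by
      have : (i:ℕ) + 1 ≤ r - 1 := hi
      have : ((i:ℕ) + 1 : ℝ) ≤ ((r - 1 : ℕ) : ℝ) := by exact_mod_cast this
      rwa [Nat.cast_sub (by omega : 1 ≤ r), Nat.cast_one] at this
    linarith
  have hid : (a - r) * Pa = (a - 1) * Pb := by
    have h := prod_shift_aux (r - 1) a
    have hc : ((r - 1 : ℕ) : ℝ) = (r : ℝ) - 1 := by
      rw [Nat.cast_sub (by omega : 1 ≤ r), Nat.cast_one]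
    rw [hc] at h
    calc (a - r) * Pa = (a - 1 - ((r:ℝ) - 1)) * Pa := by ring_nf
      _ = (a - 1) * Pb := h
  have h1 : (a - r) * (Pa * (a - 1)^(ℓ-1)) = Pb * (a - 1)^ℓ := by
    have he : (a-1)^ℓ = (a-1)^(ℓ-1) * (a-1) := by
      rw [← pow_succ]; congr 1; omega
    rw [he]; linear_combination (a-1)^(ℓ-1) * hid
  have h2 : Pb * (a - 1)^ℓ ≤ Pb * (a^(ℓ-1) * (a - r)) :=
    mul_le_mul_of_nonneg_left key hPb.le
  have h3 : (a - r) * (Pa * (a - 1)^(ℓ-1)) ≤ (a - r) * (Pb * a^(ℓ-1)) := by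
    rw [h1]; nlinarith [h2]
  have h4 : Pa * (a - 1)^(ℓ-1) ≤ Pb * a^(ℓ-1) := le_of_mul_le_mul_left h3 harr
  have hle : Pa / a^(ℓ-1) ≤ Pb / (a - 1)^(ℓ-1) := by
    rw [div_le_div_iff₀ (pow_pos ha0 _) (pow_pos ha1 _)]
    exact h4
  have hlt := hm.2 (m - 1) (by omega) (by omega)
  rw [hf (m - 1), hf m, hcast] at hlt
  rw [← hadef, ← hPadef, ← hPbdef] at hlt
  linarith
end

section
/- Let t > 1 be a real number and let h_t(x) = e^{tx}(1−x) − 1. Then h_t has a unique positive real root α, and α satisfies 1 − 1/t² < α < 1. -/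
/-!
On `(0, 1)`, where every positive root lies, `h_t(x) = 0` is equivalent to `φ(x) = 0` for
`φ(x) = t x + log (1 - x)`. This `φ` is strictly concave and vanishes at `0`, so it has at most
one positive zero. A root exists in `(1 - 1/t², 1)` by the intermediate value theorem, since
`h_t(1) = -1` and `h_t(1 - 1/t²) = e^{t - 1/t} / t² - 1 > 0`; the last inequality is
`2 log t < t - 1/t`, i.e. `log t < sinh (log t)`.
-/

open Real Set

theorem StrictConcaveOn.pos_of_eq_zero_of_eq_zero {𝕜 β : Type*} [Field 𝕜] [LinearOrder 𝕜]
    [IsStrictOrderedRing 𝕜] [AddCommMonoid β] [LinearOrder β] [IsOrderedAddMonoid β]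
    [Module 𝕜 β] [PosSMulStrictMono 𝕜 β] {s : Set 𝕜} {f : 𝕜 → β} (hf : StrictConcaveOn 𝕜 s f)
    {x y z : 𝕜} (hx : x ∈ s) (hz : z ∈ s) (hxy : x < y) (hyz : y < z) (hfx : f x = 0)
    (hfz : f z = 0) : 0 < f y := by
  have hxz := hxy.trans hyz
  have := hf.lt_on_openSegment hx hz hxz.ne (by rw [openSegment_eq_Ioo hxz]; exact ⟨hxy, hyz⟩)
  rwa [hfx, hfz, min_self] at this

theorem strictConcaveOn_mul_add_log_one_sub (t : ℝ) :
    StrictConcaveOn ℝ (Iio 1) (fun x => t * x + log (1 - x)) := by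
  refine ⟨convex_Iio 1, fun x hx y hy hxy a b ha hb hab => ?_⟩
  have hlog := strictConcaveOn_log_Ioi.2 (mem_Ioi.2 (sub_pos.2 hx)) (mem_Ioi.2 (sub_pos.2 hy))
    (sub_right_injective.ne hxy) ha hb hab
  have hcomb : a • (1 - x) + b • (1 - y) = 1 - (a • x + b • y) := by
    simp only [smul_eq_mul]
    linear_combination hab
  rw [hcomb] at hlog
  simp only [smul_eq_mul] at hlog ⊢
  linarith

theorem lt_one_and_mul_add_log_one_sub_eq_zero_of_root {t x : ℝ}
    (hx : exp (t * x) * (1 - x) - 1 = 0) : x < 1 ∧ t * x + log (1 - x) = 0 := by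
  have hprod : exp (t * x) * (1 - x) = 1 := by linarith
  have hpos : 0 < 1 - x := pos_of_mul_pos_right (hprod ▸ one_pos) (exp_pos _).le
  refine ⟨by linarith, ?_⟩
  have := congrArg log hprod
  rwa [log_mul (exp_pos _).ne' hpos.ne', log_exp, log_one] at this

theorem eq_of_pos_of_root {t x y : ℝ} (hx0 : 0 < x) (hy0 : 0 < y)
    (hx : exp (t * x) * (1 - x) - 1 = 0) (hy : exp (t * y) * (1 - y) - 1 = 0) : x = y := by
  wlog hxy : x < y generalizing x y
  · rcases (not_lt.1 hxy).lt_or_eq with hyx | hyx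
    · exact (this hy0 hx0 hy hx hyx).symm
    · exact hyx.symm
  obtain ⟨-, hφx⟩ := lt_one_and_mul_add_log_one_sub_eq_zero_of_root hx
  obtain ⟨hy1, hφy⟩ := lt_one_and_mul_add_log_one_sub_eq_zero_of_root hy
  have hφx_pos := (strictConcaveOn_mul_add_log_one_sub t).pos_of_eq_zero_of_eq_zero
    (x := 0) (by norm_num) hy1 hx0 hxy (by simp) hφy
  exact absurd hφx hφx_pos.ne'

theorem two_mul_log_lt_sub_inv {t : ℝ} (ht : 1 < t) : 2 * log t < t - t⁻¹ := by
  have := self_lt_sinh_iff.2 (log_pos ht)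
  rw [sinh_log (by linarith)] at this
  linarith

theorem exists_root_mem_Ioo {t : ℝ} (ht : 1 < t) :
    ∃ α ∈ Ioo (1 - 1 / t ^ 2) 1, exp (t * α) * (1 - α) - 1 = 0 := by
  have ht0 : 0 < t := by linarith
  have hc1 : 1 - 1 / t ^ 2 ≤ 1 := by
    have : 0 < 1 / t ^ 2 := by positivity
    linarith
  have hcont : ContinuousOn (fun x => exp (t * x) * (1 - x) - 1) (Icc (1 - 1 / t ^ 2) 1) := by
    fun_prop
  have hpos : 0 < exp (t * (1 - 1 / t ^ 2)) * (1 - (1 - 1 / t ^ 2)) - 1 := by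
    have hexponent : t * (1 - 1 / t ^ 2) = t - t⁻¹ := by field_simp
    have hlt : t ^ 2 < exp (t - t⁻¹) := by
      rw [← exp_log (by positivity : 0 < t ^ 2), exp_lt_exp, log_pow]
      push_cast
      exact two_mul_log_lt_sub_inv ht
    rw [hexponent, sub_sub_cancel, sub_pos, mul_one_div, one_lt_div (by positivity)]
    exact hlt
  exact intermediate_value_Ioo' hc1 hcont ⟨by simp, hpos⟩

/-- For real `t > 1`, the function `h_t(x) = e^{tx}(1−x) − 1` has a unique positive
real root `α`, and `1 − 1/t² < α < 1`. -/
theorem unique_positive_root (t : ℝ) (ht : 1 < t) :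
    ∃ α : ℝ, (0 < α ∧ Real.exp (t * α) * (1 - α) - 1 = 0) ∧
      (∀ β : ℝ, 0 < β → Real.exp (t * β) * (1 - β) - 1 = 0 → β = α) ∧
      1 - 1 / t ^ 2 < α ∧ α < 1 := by
  obtain ⟨α, ⟨hcα, hα1⟩, hα⟩ := exists_root_mem_Ioo ht
  have hc0 : 0 ≤ 1 - 1 / t ^ 2 := by
    rw [sub_nonneg, div_le_one (by positivity)]
    nlinarith
  have hα0 : 0 < α := hc0.trans_lt hcα
  exact ⟨α, ⟨hα0, hα⟩, fun β hβ0 hβ => eq_of_pos_of_root hβ0 hα0 hβ hα, hcα, hα1⟩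
end

section
/- For all integers r ≥ 2 and x ∈ [r, 2r), the function ϑ(x) = x ln x + (x−1) ln(r−1) − (x−1) ln((r+1)x − 2r) − ln(2r − x) satisfies ϑ(x) ≥ 0. -/
/-!
Both `ϑ` and `ϑ'` vanish at `x = r`, and on `[r, 2r)` the second derivative has the closed form
`ϑ''(x) = 4r²(x - r)((r + 2)x - 4r) / (((r + 1)x - 2r)² (2r - x)² x)`, which is nonnegative since
`(r + 2)x - 4r ≥ r(r - 2) ≥ 0`. Hence `ϑ'` is monotone with `ϑ'(r) = 0`, so `ϑ' ≥ 0`, and then `ϑ` is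
monotone with `ϑ(r) = 0`.
-/

open Real Set

noncomputable section

def vartheta (R y : ℝ) : ℝ :=
  y * log y + (y - 1) * log (R - 1) - (y - 1) * log ((R + 1) * y - 2 * R) - log (2 * R - y)

def varthetaDeriv (R y : ℝ) : ℝ :=
  log y + 1 + log (R - 1) - log ((R + 1) * y - 2 * R)
    - (y - 1) * (R + 1) / ((R + 1) * y - 2 * R) + 1 / (2 * R - y)

def varthetaDeriv2 (R y : ℝ) : ℝ :=
  4 * R ^ 2 * (y - R) * ((R + 2) * y - 4 * R) / (((R + 1) * y - 2 * R) ^ 2 * (2 * R - y) ^ 2 * y)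

end

theorem monotoneOn_of_hasDerivAt_nonneg {D : Set ℝ} (hD : Convex ℝ D) {f f' : ℝ → ℝ}
    (hf : ∀ x ∈ D, HasDerivAt f (f' x) x) (hf' : ∀ x ∈ interior D, 0 ≤ f' x) :
    MonotoneOn f D :=
  monotoneOn_of_hasDerivWithinAt_nonneg hD (fun x hx ↦ (hf x hx).continuousAt.continuousWithinAt)
    (fun x hx ↦ (hf x (interior_subset hx)).hasDerivWithinAt) hf'

theorem hasDerivAt_mul_sub (a b y : ℝ) : HasDerivAt (fun y ↦ a * y - b) a y := by
  simpa using ((hasDerivAt_id y).const_mul a).sub_const b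

section

variable {R y : ℝ}

theorem hasDerivAt_vartheta (hy : y ≠ 0) (hB : (R + 1) * y - 2 * R ≠ 0) (hC : 2 * R - y ≠ 0) :
    HasDerivAt (vartheta R) (varthetaDeriv R y) y := by
  have hlin := hasDerivAt_mul_sub (R + 1) (2 * R) y
  have h := ((((hasDerivAt_id y).mul (hasDerivAt_log hy)).add
    (((hasDerivAt_id y).sub_const 1).mul_const (log (R - 1)))).sub
    (((hasDerivAt_id y).sub_const 1).mul (hlin.log hB))).sub
    (((hasDerivAt_const y (2 * R)).sub (hasDerivAt_id y)).log hC)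
  refine h.congr_deriv ?_
  simp only [varthetaDeriv, id, Pi.sub_apply]
  field_simp
  ring

theorem hasDerivAt_varthetaDeriv (hy : y ≠ 0) (hB : (R + 1) * y - 2 * R ≠ 0)
    (hC : 2 * R - y ≠ 0) : HasDerivAt (varthetaDeriv R) (varthetaDeriv2 R y) y := by
  have hlin := hasDerivAt_mul_sub (R + 1) (2 * R) y
  have h := (((((hasDerivAt_log hy).add_const 1).add_const (log (R - 1))).sub (hlin.log hB)).sub
    ((((hasDerivAt_id y).sub_const 1).mul_const (R + 1)).div hlin hB)).add
    ((hasDerivAt_const y 1).div ((hasDerivAt_const y (2 * R)).sub (hasDerivAt_id y)) hC)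
  refine h.congr_deriv ?_
  simp only [varthetaDeriv2, id, Pi.sub_apply]
  -- field_simp only clears these denominators once they are atoms
  generalize hb : (R + 1) * y - 2 * R = b at hB ⊢
  generalize hc : 2 * R - y = c at hC ⊢
  field_simp
  subst hb hc
  ring

theorem varthetaDeriv2_nonneg (hR : 2 ≤ R) (hy : R ≤ y) : 0 ≤ varthetaDeriv2 R y := by
  have h1 : 0 ≤ y - R := by linarith
  have h2 : 0 ≤ (R + 2) * y - 4 * R := by nlinarith
  have h3 : 0 ≤ y := by linarith
  unfold varthetaDeriv2
  positivity

theorem vartheta_self (h0 : R ≠ 0) (h1 : R - 1 ≠ 0) : vartheta R R = 0 := by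
  have hB : (R + 1) * R - 2 * R = R * (R - 1) := by ring
  rw [vartheta, hB, log_mul h0 h1, two_mul, add_sub_cancel_right]
  ring

theorem varthetaDeriv_self (h0 : R ≠ 0) (h1 : R - 1 ≠ 0) : varthetaDeriv R R = 0 := by
  have hB : (R + 1) * R - 2 * R = R * (R - 1) := by ring
  rw [varthetaDeriv, hB, log_mul h0 h1, two_mul, add_sub_cancel_right]
  field_simp
  ring

theorem vartheta_log_args_ne_zero (hR : 1 < R) (hy : y ∈ Ico R (2 * R)) :
    y ≠ 0 ∧ (R + 1) * y - 2 * R ≠ 0 ∧ 2 * R - y ≠ 0 := by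
  obtain ⟨hRy, hy2⟩ := hy
  refine ⟨by linarith, ?_, by linarith⟩
  nlinarith

end

/-- For integers `r ≥ 2` and real `x ∈ [r, 2r)`:
`ϑ(x) = x ln x + (x−1) ln(r−1) − (x−1) ln((r+1)x − 2r) − ln(2r − x) ≥ 0`. -/
theorem vartheta_nonneg (r : ℕ) (hr : 2 ≤ r) (x : ℝ) (hx1 : (r : ℝ) ≤ x) (hx2 : x < 2 * r) :
    0 ≤ x * Real.log x + (x - 1) * Real.log ((r : ℝ) - 1)
        - (x - 1) * Real.log (((r : ℝ) + 1) * x - 2 * r) - Real.log (2 * r - x) := by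
  have hR : (2 : ℝ) ≤ r := by exact_mod_cast hr
  have h0 : (r : ℝ) ≠ 0 := by positivity
  have h1 : (r : ℝ) - 1 ≠ 0 := by linarith
  have hargs (y) (hy : y ∈ Ico (r : ℝ) (2 * r)) := vartheta_log_args_ne_zero (by linarith) hy
  have hD : MonotoneOn (varthetaDeriv r) (Ico r (2 * r)) :=
    monotoneOn_of_hasDerivAt_nonneg (convex_Ico _ _)
      (fun y hy ↦ hasDerivAt_varthetaDeriv (hargs y hy).1 (hargs y hy).2.1 (hargs y hy).2.2)
      (fun y hy ↦ varthetaDeriv2_nonneg hR (by rw [interior_Ico] at hy; exact hy.1.le))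
  have hR_mem : (r : ℝ) ∈ Ico (r : ℝ) (2 * r) := left_mem_Ico.2 (by linarith)
  have hθ : MonotoneOn (vartheta r) (Ico r (2 * r)) :=
    monotoneOn_of_hasDerivAt_nonneg (convex_Ico _ _)
      (fun y hy ↦ hasDerivAt_vartheta (hargs y hy).1 (hargs y hy).2.1 (hargs y hy).2.2)
      (fun y hy ↦ varthetaDeriv_self h0 h1 ▸ hD hR_mem (interior_subset hy) (interior_subset hy).1)
  have := hθ hR_mem ⟨hx1, hx2⟩ hx1
  rwa [vartheta_self h0 h1] at this
end

section
/- Let ℓ, r be integers with r ≥ 2 and r+1 ≤ ℓ ≤ 2r−1, and let m be the unique maximizer of f(k) = (k−1)_{r−1}/k^{ℓ−1} over integers k ≥ r. Define h(q) = (q)_{r−1}·(2r − ℓ + 2(m−q)(ℓ−r)) for integers 0 ≤ q ≤ m, where (q)_{r−1} is the falling factorial. Then h(q) < h(m−1) for every integer q ∈ [0, m] with q ≠ m−1. -/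
/-!
Only the neighbours of the maximiser matter. Comparing `f (m + 1) < f m` with the inequality
`((1 + x) / (1 - x)) ^ n ≤ (1 + n x) / (1 - n x)` (that is, `n artanh x ≤ artanh (n x)`) at
`x = 1 / (2m + 1)` gives `ℓ (r - 1) < 2 (ℓ - r) m`, and comparing `f (m - 1) < f m` with
`(1 - x) ^ ℓ ≤ 1 - ℓ x + (ℓ choose 2) x ^ 2` at `x = 1 / m` gives `2 (ℓ - r) m ≤ ℓ (ℓ - 1)`.
Since `(q + 1)_{r-1} / (q)_{r-1} = (q + 1) / (q + 2 - r)`, the upper bound makes `h` strictly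
increasing on `[r - 1, m - 1]`, the lower bound gives `h m < h (m - 1)`, and `h` vanishes below
`r - 1`.
-/

section Binomial

variable {R : Type*} [CommRing R] [LinearOrder R] [IsStrictOrderedRing R]

theorem add_pow_mul_sub_le_sub_pow_mul_add {a b : R} (hb : 0 ≤ b) :
    ∀ n : ℕ, n * b ≤ a → (a + b) ^ n * (a - n * b) ≤ (a - b) ^ n * (a + n * b)
  | 0, _ => by simp
  | n + 1, hn => by
    push_cast at hn ⊢
    have hnb : 0 ≤ (n : R) * b := by positivity
    have ih := add_pow_mul_sub_le_sub_pow_mul_add hb n (by linarith)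
    rcases hb.eq_or_lt with rfl | hb
    · simp
    have hpos : 0 < a - n * b := by linarith
    have hstep : (a + n * b) * (a + b) * (a - (n + 1) * b)
        ≤ (a + (n + 1) * b) * (a - n * b) * (a - b) := by
      have : 0 ≤ 2 * n * (n + 1) * b ^ 3 := by positivity
      linarith [show (a + (n + 1) * b) * (a - n * b) * (a - b)
        = (a + n * b) * (a + b) * (a - (n + 1) * b) + 2 * n * (n + 1) * b ^ 3 by ring]
    refine le_of_mul_le_mul_left ?_ hpos
    calc (a - n * b) * ((a + b) ^ (n + 1) * (a - (n + 1) * b))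
        = ((a + b) ^ n * (a - n * b)) * ((a + b) * (a - (n + 1) * b)) := by ring
      _ ≤ ((a - b) ^ n * (a + n * b)) * ((a + b) * (a - (n + 1) * b)) :=
          mul_le_mul_of_nonneg_right ih (mul_nonneg (by linarith) (by linarith))
      _ = (a - b) ^ n * ((a + n * b) * (a + b) * (a - (n + 1) * b)) := by ring
      _ ≤ (a - b) ^ n * ((a + (n + 1) * b) * (a - n * b) * (a - b)) :=
          mul_le_mul_of_nonneg_left hstep (pow_nonneg (by linarith) n)
      _ = (a - n * b) * ((a - b) ^ (n + 1) * (a + (n + 1) * b)) := by ring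

theorem sq_mul_sub_pow_le {a b : R} (hb : 0 ≤ b) (hab : b ≤ a) :
    ∀ n : ℕ, a ^ 2 * (a - b) ^ n ≤ a ^ n * (a ^ 2 - n * a * b + n.choose 2 * b ^ 2)
  | 0 => by simp
  | n + 1 => by
    have ih := sq_mul_sub_pow_le hb hab n
    have hcube : 0 ≤ a ^ n * ((n.choose 2 : R) * b ^ 3) :=
      mul_nonneg (pow_nonneg (hb.trans hab) n) (by positivity)
    rw [Nat.choose_succ_succ', Nat.choose_one_right]
    push_cast
    calc a ^ 2 * (a - b) ^ (n + 1) = (a - b) * (a ^ 2 * (a - b) ^ n) := by ring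
      _ ≤ (a - b) * (a ^ n * (a ^ 2 - n * a * b + n.choose 2 * b ^ 2)) :=
          mul_le_mul_of_nonneg_left ih (by linarith)
      _ ≤ a ^ (n + 1) * (a ^ 2 - (n + 1) * a * b + (n + n.choose 2) * b ^ 2) := by
          linarith [show a ^ (n + 1) * (a ^ 2 - (n + 1) * a * b + (n + n.choose 2) * b ^ 2)
            = (a - b) * (a ^ n * (a ^ 2 - n * a * b + n.choose 2 * b ^ 2))
              + a ^ n * ((n.choose 2 : R) * b ^ 3) by ring]

end Binomial

theorem mul_sub_one_lt_of_pow_lt {m r : ℝ} {ℓ : ℕ} (hm : 0 < m) (hℓ : 1 ≤ ℓ)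
    (hℓm : ℓ < 2 * m + 2) (h : m ^ ℓ < (m + 1 - r) * (m + 1) ^ (ℓ - 1)) :
    ℓ * (r - 1) < 2 * (ℓ - r) * m := by
  obtain ⟨n, rfl⟩ := Nat.exists_eq_add_of_le' hℓ
  rw [Nat.add_sub_cancel, pow_succ'] at h
  push_cast at hℓm ⊢
  have hartanh := add_pow_mul_sub_le_sub_pow_mul_add (a := m + 1 / 2) (b := 1 / 2)
    (by norm_num) n (by linarith)
  rw [show m + 1 / 2 + 1 / 2 = m + 1 by ring, show m + 1 / 2 - 1 / 2 = m by ring] at hartanh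
  have hP : 0 < m ^ n := pow_pos hm n
  have hQ : 0 < (m + 1) ^ n := by positivity
  have hr : 0 < m + 1 - r := by
    by_contra! hr
    nlinarith [mul_nonpos_of_nonpos_of_nonneg hr hQ.le]
  have : m ^ n * (m * (m + 1 / 2 - n * (1 / 2)))
      < m ^ n * ((m + 1 - r) * (m + 1 / 2 + n * (1 / 2))) :=
    calc m ^ n * (m * (m + 1 / 2 - n * (1 / 2)))
        = m * m ^ n * (m + 1 / 2 - n * (1 / 2)) := by ring
      _ < (m + 1 - r) * (m + 1) ^ n * (m + 1 / 2 - n * (1 / 2)) :=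
          mul_lt_mul_of_pos_right h (by linarith)
      _ = (m + 1 - r) * ((m + 1) ^ n * (m + 1 / 2 - n * (1 / 2))) := by ring
      _ ≤ (m + 1 - r) * (m ^ n * (m + 1 / 2 + n * (1 / 2))) :=
          mul_le_mul_of_nonneg_left hartanh hr.le
      _ = m ^ n * ((m + 1 - r) * (m + 1 / 2 + n * (1 / 2))) := by ring
  linarith [lt_of_mul_lt_mul_left this hP.le]

theorem two_mul_le_of_sub_mul_pow_le {m r : ℝ} {ℓ : ℕ} (hm : 1 ≤ m) (hℓ : 1 ≤ ℓ)
    (h : (m - r) * m ^ (ℓ - 1) ≤ (m - 1) ^ ℓ) : 2 * (ℓ - r) * m ≤ ℓ * (ℓ - 1) := by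
  have hquad := sq_mul_sub_pow_le zero_le_one hm ℓ
  simp only [mul_one, one_pow, Nat.cast_choose_two] at hquad
  obtain ⟨n, rfl⟩ := Nat.exists_eq_add_of_le' hℓ
  rw [Nat.add_sub_cancel] at h
  push_cast at hquad ⊢
  rw [add_sub_cancel_right] at hquad ⊢
  have : m ^ (n + 1) * (m * (m - r)) ≤ m ^ (n + 1) * (m ^ 2 - (n + 1) * m + (n + 1) * n / 2) :=
    calc m ^ (n + 1) * (m * (m - r)) = m ^ 2 * ((m - r) * m ^ n) := by ring
      _ ≤ m ^ 2 * (m - 1) ^ (n + 1) := mul_le_mul_of_nonneg_left h (by positivity)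
      _ ≤ _ := hquad
  linarith [le_of_mul_le_mul_left this (by positivity)]

theorem prod_range_sub_mul {R : Type*} [CommRing R] (x : R) (n : ℕ) :
    (x - n) * ∏ i ∈ Finset.range n, (x + 1 - (i + 1))
      = x * ∏ i ∈ Finset.range n, (x - (i + 1)) := by
  have h₁ := Finset.prod_range_succ (fun i : ℕ => x - i) n
  have h₂ := Finset.prod_range_succ' (fun i : ℕ => x - i) n
  simp only [Nat.cast_add, Nat.cast_one, Nat.cast_zero, sub_zero] at h₁ h₂
  simp only [add_sub_add_right_eq_sub]
  rw [mul_comm, ← h₁, h₂, mul_comm]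

noncomputable def fallingRatio (r ℓ k : ℕ) : ℝ :=
  (∏ i ∈ Finset.range (r - 1), ((k : ℝ) - (i + 1))) / (k : ℝ) ^ (ℓ - 1)

namespace fallingRatio

variable {r ℓ m k : ℕ}

theorem pos (hk : 0 < k) (hrk : r ≤ k) : 0 < fallingRatio r ℓ k := by
  refine div_pos (Finset.prod_pos fun i hi => ?_) (by positivity)
  have : ((i + 1 : ℕ) : ℝ) < k := by
    have := Finset.mem_range.mp hi
    exact_mod_cast (by omega : i + 1 < k)
  push_cast at this
  linarith

theorem succ_mul (hr : 1 ≤ r) (hℓ : 1 ≤ ℓ) (hk : 0 < k) :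
    fallingRatio r ℓ (k + 1) * (((k : ℝ) + 1 - r) * ((k : ℝ) + 1) ^ (ℓ - 1))
      = fallingRatio r ℓ k * (k : ℝ) ^ ℓ := by
  have hk' : (k : ℝ) ≠ 0 := by positivity
  have hr' : (k : ℝ) + 1 - r = k - (r - 1 : ℕ) := by push_cast [Nat.cast_sub hr]; ring
  unfold fallingRatio
  rw [hr', ← pow_sub_one_mul (by omega : ℓ ≠ 0) (k : ℝ)]
  push_cast
  field_simp
  rw [mul_comm, prod_range_sub_mul]

theorem succ_lt_iff (hr : 1 ≤ r) (hℓ : 1 ≤ ℓ) (hrk : r ≤ k) :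
    fallingRatio r ℓ (k + 1) < fallingRatio r ℓ k
      ↔ (k : ℝ) ^ ℓ < ((k : ℝ) + 1 - r) * ((k : ℝ) + 1) ^ (ℓ - 1) := by
  have hk : 0 < k := by omega
  have hA : 0 < ((k : ℝ) + 1 - r) * ((k : ℝ) + 1) ^ (ℓ - 1) := by
    have : (r : ℝ) ≤ k := by exact_mod_cast hrk
    exact mul_pos (by linarith) (by positivity)
  rw [← mul_lt_mul_iff_of_pos_right hA, succ_mul hr hℓ hk,
    mul_lt_mul_iff_of_pos_left (pos hk hrk)]

theorem mul_sub_one_lt_of_isMaximizer (hr : 1 ≤ r) (hℓ : 1 ≤ ℓ) (hℓm : ℓ < 2 * m + 2)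
    (hrm : r ≤ m) (hmax : ∀ k, r ≤ k → k ≠ m → fallingRatio r ℓ k < fallingRatio r ℓ m) :
    (ℓ : ℝ) * (r - 1) < 2 * (ℓ - r) * m :=
  mul_sub_one_lt_of_pow_lt (by exact_mod_cast (by omega : 0 < m)) hℓ (by exact_mod_cast hℓm)
    ((succ_lt_iff hr hℓ hrm).mp (hmax (m + 1) (by omega) (by omega)))

theorem two_mul_le_of_isMaximizer (hr : 1 ≤ r) (hℓ : 1 ≤ ℓ) (hrm : r ≤ m)
    (hmax : ∀ k, r ≤ k → k ≠ m → fallingRatio r ℓ k < fallingRatio r ℓ m) :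
    2 * ((ℓ : ℝ) - r) * m ≤ ℓ * (ℓ - 1) := by
  have hm : (1 : ℝ) ≤ m := by exact_mod_cast (by omega : 1 ≤ m)
  refine two_mul_le_of_sub_mul_pow_le hm hℓ ?_
  rcases hrm.eq_or_lt with rfl | hrm
  · rw [sub_self, zero_mul]
    exact pow_nonneg (by linarith) ℓ
  obtain ⟨k, rfl⟩ : ∃ k, m = k + 1 := ⟨m - 1, by omega⟩
  have hk := hmax k (by omega) (by omega)
  have := not_lt.mp ((succ_lt_iff hr hℓ (by omega : r ≤ k)).not.mp hk.not_gt)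
  push_cast
  rwa [add_sub_cancel_right]

end fallingRatio

theorem descFactorial_succ_mul_sub {j k : ℕ} (x y : ℤ) :
    ((j + 1 - k : ℕ) : ℤ) * ((j + 1).descFactorial k * y - j.descFactorial k * x)
      = j.descFactorial k * ((j + 1) * y - (j + 1 - k : ℕ) * x) := by
  have h : ((j + 1 - k : ℕ) : ℤ) * (j + 1).descFactorial k = (j + 1) * j.descFactorial k := by
    exact_mod_cast Nat.succ_descFactorial j k
  linear_combination y * h

def fallingWeight (r ℓ m q : ℕ) : ℤ :=
  (q.descFactorial (r - 1) : ℤ) *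
    (2 * (r : ℤ) - (ℓ : ℤ) + 2 * ((m : ℤ) - (q : ℤ)) * ((ℓ : ℤ) - (r : ℤ)))

namespace fallingWeight

variable {r ℓ m : ℕ}

theorem eq_zero_of_lt {q : ℕ} (hq : q < r - 1) : fallingWeight r ℓ m q = 0 := by
  simp [fallingWeight, Nat.descFactorial_eq_zero_iff_lt.mpr hq]

theorem pred_eq (hm : 1 ≤ m) :
    fallingWeight r ℓ m (m - 1) = (m - 1).descFactorial (r - 1) * ℓ := by
  rw [fallingWeight, Nat.cast_sub hm]
  ring

theorem lt_succ (hr : 1 ≤ r) (hrℓ : r < ℓ) (hℓr : ℓ < 2 * r)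
    (hup : 2 * ((ℓ : ℤ) - r) * m ≤ ℓ * (ℓ - 1)) {j : ℕ} (hj : r - 1 ≤ j) (hjm : j + 2 ≤ m) :
    fallingWeight r ℓ m j < fallingWeight r ℓ m (j + 1) := by
  have hid := descFactorial_succ_mul_sub (j := j) (k := r - 1)
    (2 * (r : ℤ) - ℓ + 2 * ((m : ℤ) - j) * ((ℓ : ℤ) - r))
    (2 * (r : ℤ) - ℓ + 2 * ((m : ℤ) - (j + 1 : ℕ)) * ((ℓ : ℤ) - r))
  rw [show ((j + 1 - (r - 1) : ℕ) : ℤ) = j + 2 - r by omega] at hid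
  push_cast at hid
  have hd : (0 : ℤ) < j.descFactorial (r - 1) := by exact_mod_cast Nat.descFactorial_pos.mpr hj
  have hbracket : 0 < ((j : ℤ) + 1) * (2 * r - ℓ + 2 * (m - (j + 1)) * (ℓ - r))
      - (j + 2 - r) * (2 * r - ℓ + 2 * (m - j) * (ℓ - r)) := by
    have h₁ : (0 : ℤ) ≤ 2 * ((ℓ : ℤ) - r) * r * (m - 2 - j) :=
      mul_nonneg (mul_nonneg (by omega) (by omega)) (by omega)
    have h₂ : (0 : ℤ) < ((ℓ : ℤ) - r) * (r - (ℓ - r)) := mul_pos (by omega) (by omega)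
    linear_combination h₁ + hup + h₂
  have := pos_of_mul_pos_right (hid ▸ mul_pos hd hbracket) (by omega)
  unfold fallingWeight
  push_cast
  linarith

theorem self_lt_pred (hr : 1 ≤ r) (hrm : r ≤ m)
    (hlow : (ℓ : ℤ) * (r - 1) < 2 * ((ℓ : ℤ) - r) * m) :
    fallingWeight r ℓ m m < fallingWeight r ℓ m (m - 1) := by
  obtain ⟨j, rfl⟩ : ∃ j, m = j + 1 := ⟨m - 1, by omega⟩
  rw [Nat.add_sub_cancel]
  have hid := descFactorial_succ_mul_sub (j := j) (k := r - 1)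
    (2 * (r : ℤ) - ℓ + 2 * ((j + 1 : ℕ) - (j : ℤ)) * ((ℓ : ℤ) - r))
    (2 * (r : ℤ) - ℓ + 2 * ((j + 1 : ℕ) - ((j + 1 : ℕ) : ℤ)) * ((ℓ : ℤ) - r))
  rw [show ((j + 1 - (r - 1) : ℕ) : ℤ) = j + 2 - r by omega] at hid
  push_cast at hid hlow
  have hd : (0 : ℤ) < j.descFactorial (r - 1) := by
    exact_mod_cast Nat.descFactorial_pos.mpr (by omega)
  have hbracket : ((j : ℤ) + 1) * (2 * r - ℓ) - (j + 2 - r) * ℓ < 0 := by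
    linear_combination hlow
  have := neg_of_mul_neg_right
    (hid ▸ mul_neg_of_pos_of_neg hd (by linear_combination hbracket)) (by omega)
  unfold fallingWeight
  push_cast
  linarith

theorem lt_pred (hr : 2 ≤ r) (hrℓ : r < ℓ) (hℓr : ℓ < 2 * r) (hrm : r ≤ m)
    (hlow : (ℓ : ℤ) * (r - 1) < 2 * ((ℓ : ℤ) - r) * m)
    (hup : 2 * ((ℓ : ℤ) - r) * m ≤ ℓ * (ℓ - 1)) {q : ℕ} (hqm : q ≤ m) (hq : q ≠ m - 1) :
    fallingWeight r ℓ m q < fallingWeight r ℓ m (m - 1) := by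
  rcases lt_or_ge q (r - 1) with hqr | hqr
  · rw [eq_zero_of_lt hqr, pred_eq (by omega)]
    have : 0 < (m - 1).descFactorial (r - 1) := Nat.descFactorial_pos.mpr (by omega)
    exact mul_pos (by exact_mod_cast this) (by omega)
  rcases eq_or_ne q m with rfl | hqm'
  · exact self_lt_pred (by omega) hrm hlow
  have hmono : StrictMonoOn (fallingWeight r ℓ m) (Set.Icc (r - 1) (m - 1)) :=
    strictMonoOn_of_lt_succ Set.ordConnected_Icc fun j _ hj hj' => by
      rw [Order.succ_eq_add_one] at hj' ⊢
      exact lt_succ (by omega) hrℓ hℓr hup hj.1 (by have := hj'.2; omega)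
  exact hmono ⟨hqr, by omega⟩ ⟨by omega, le_rfl⟩ (by omega)

end fallingWeight

/-- For `r + 1 ≤ ℓ ≤ 2r − 1` and `m` the unique maximizer of `f`, the function
`h(q) = (q)_{r−1}·(2r − ℓ + 2(m−q)(ℓ−r))` satisfies `h(q) < h(m−1)` for all `q ≤ m`,
`q ≠ m − 1`. -/
theorem h_max_at_m_sub_one (r ℓ m : ℕ) (hr : 2 ≤ r) (hℓ1 : r + 1 ≤ ℓ) (hℓ2 : ℓ ≤ 2 * r - 1)
    (f : ℕ → ℝ)
    (hf : ∀ k, f k = (∏ i ∈ Finset.range (r - 1), ((k : ℝ) - (i + 1))) / (k : ℝ) ^ (ℓ - 1))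
    (hm : r ≤ m ∧ ∀ k, r ≤ k → k ≠ m → f k < f m)
    (h : ℕ → ℤ)
    (hh : ∀ q, h q = (Nat.descFactorial q (r - 1) : ℤ) *
        (2 * (r : ℤ) - (ℓ : ℤ) + 2 * ((m : ℤ) - (q : ℤ)) * ((ℓ : ℤ) - (r : ℤ)))) :
    ∀ q : ℕ, q ≤ m → q ≠ m - 1 → h q < h (m - 1) := by
  obtain ⟨hrm, hmax⟩ := hm
  obtain rfl : f = fallingRatio r ℓ := funext hf
  obtain rfl : h = fallingWeight r ℓ m := funext hh
  have hlow := fallingRatio.mul_sub_one_lt_of_isMaximizer (by omega) (by omega) (by omega) hrm hmax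
  have hup := fallingRatio.two_mul_le_of_isMaximizer (by omega) (by omega) hrm hmax
  intro q hqm hq
  exact fallingWeight.lt_pred hr (by omega) (by omega) hrm (by exact_mod_cast hlow)
    (by exact_mod_cast hup) hqm hq
end

section
/- Let a₁ ≥ ··· ≥ a_r ≥ 1 be integers with C(aᵢ − aⱼ, 2) ≤ aⱼ − 1 for all i < j (equivalently (aᵢ−aⱼ)² ≤ aᵢ + aⱼ − 2). Then Σ_{1≤i<j≤r} (aᵢ − aⱼ)² ≤ (r−1)ℓ − r², where ℓ = a₁ + ··· + a_r, provided r ≥ 4 and a_r ≥ 2. -/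
/-!
Shift by the smallest part: with `bᵢ = aᵢ - a_r ∈ [0, d]`, `d = a₁ - a_r`, `S = Σ bᵢ`, Lagrange's
identity gives `Σ_{i<j} (aᵢ - aⱼ)² = r Σ bᵢ² - S² ≤ r d S - S²`, while `ℓ = r a_r + S`. The
remaining inequality is a concave quadratic in `S`, and its maximum over all `S` is already small
enough once the pair `(1, r)` of the hypothesis gives `d² - d + 2 ≤ 2 a_r`.
-/

open Finset

theorem sum_Icc_sum_Icc_sub_sq {R : Type*} [CommRing R] (f : ℕ → R) (n : ℕ) :
    ∑ i ∈ Icc 1 n, ∑ j ∈ Icc (i + 1) n, (f i - f j) ^ 2 =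
      n * ∑ i ∈ Icc 1 n, f i ^ 2 - (∑ i ∈ Icc 1 n, f i) ^ 2 := by
  induction n with
  | zero => simp
  | succ n ih =>
    have hinner : ∀ i ∈ Icc 1 n, ∑ j ∈ Icc (i + 1) (n + 1), (f i - f j) ^ 2 =
        ∑ j ∈ Icc (i + 1) n, (f i - f j) ^ 2 + (f i - f (n + 1)) ^ 2 := fun i hi =>
      sum_Icc_succ_top (by simp at hi; omega) _
    have hlast : ∑ j ∈ Icc (n + 1 + 1) (n + 1), (f (n + 1) - f j) ^ 2 = 0 := by simp
    have hnew : ∑ i ∈ Icc 1 n, (f i - f (n + 1)) ^ 2 =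
        ∑ i ∈ Icc 1 n, f i ^ 2 - 2 * f (n + 1) * ∑ i ∈ Icc 1 n, f i + n * f (n + 1) ^ 2 := by
      simp only [sub_sq, sum_add_distrib, sum_sub_distrib, ← sum_mul, ← mul_sum, sum_const,
        Nat.card_Icc, nsmul_eq_mul]
      push_cast
      ring
    rw [sum_Icc_succ_top (by omega), hlast, sum_congr rfl hinner, sum_add_distrib, ih, hnew,
      sum_Icc_succ_top (by omega), sum_Icc_succ_top (by omega)]
    push_cast
    ring

theorem sum_sq_le_mul_sum {ι R : Type*} [Semiring R] [PartialOrder R] [IsOrderedRing R]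
    (s : Finset ι) (b : ι → R) (d : R) (hb : ∀ i ∈ s, 0 ≤ b i ∧ b i ≤ d) :
    ∑ i ∈ s, b i ^ 2 ≤ d * ∑ i ∈ s, b i := by
  rw [mul_sum]
  refine sum_le_sum fun i hi => ?_
  rw [sq]
  exact mul_le_mul_of_nonneg_right (hb i hi).2 (hb i hi).1

theorem mul_mul_sub_sq_le (R d S m : ℤ) (hR : 4 ≤ R) (hm : 2 ≤ m) (hS : 0 ≤ S)
    (hd : d ^ 2 ≤ d + 2 * m - 2) :
    R * d * S - S ^ 2 ≤ (R - 1) * (R * m + S) - R ^ 2 := by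
  have hRR : 0 ≤ R * (R - 1) := by nlinarith
  rcases le_or_gt d 1 with hd1 | hd2
  · -- here `S (R (d - 1) + 1) - S² ≤ S - S² ≤ 0` for the integer `S`
    nlinarith [mul_le_mul_of_nonneg_left hm hRR, Int.le_self_sq S,
      mul_nonneg (mul_nonneg (by omega : 0 ≤ R) hS) (by omega : 0 ≤ 1 - d)]
  · have hvertex : (R * d - R + 1) ^ 2 + 4 * R ^ 2 ≤ 4 * (R * (R - 1)) * m := by
      have h1 := mul_le_mul_of_nonneg_left (by omega : d ^ 2 - d + 2 ≤ 2 * m) hRR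
      have h2 : 0 ≤ R * (R - 2) * ((d - 1) ^ 2 + 2 * (d - 1) - 3) := by
        apply mul_nonneg <;> nlinarith
      nlinarith
    nlinarith [sq_nonneg (2 * S - (R * d - R + 1))]

/-- For `r ≥ 4`, `a₁ ≥ ⋯ ≥ a_r ≥ 2` with `(aᵢ − aⱼ)² ≤ aᵢ + aⱼ − 2` for all `i < j`:
`Σ_{i<j} (aᵢ − aⱼ)² ≤ (r−1)ℓ − r²` where `ℓ = Σ aᵢ`. -/
theorem sum_sq_diff_bound (r : ℕ) (hr : 4 ≤ r)
    (a : ℕ → ℕ)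
    (hge2 : ∀ i, 1 ≤ i → i ≤ r → 2 ≤ a i)
    (hanti : ∀ i j, 1 ≤ i → i ≤ j → j ≤ r → a j ≤ a i)
    (hdiff : ∀ i j, 1 ≤ i → i < j → j ≤ r →
      ((a i : ℤ) - (a j : ℤ)) ^ 2 ≤ (a i : ℤ) + (a j : ℤ) - 2)
    (ℓ : ℕ) (hℓ : ℓ = ∑ i ∈ Finset.Icc 1 r, a i) :
    ∑ i ∈ Finset.Icc 1 r, ∑ j ∈ Finset.Icc (i + 1) r, ((a i : ℤ) - (a j : ℤ)) ^ 2 ≤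
      ((r : ℤ) - 1) * (ℓ : ℤ) - (r : ℤ) ^ 2 := by
  set m : ℤ := (a r : ℤ)
  set b : ℕ → ℤ := fun i => a i - m
  set S := ∑ i ∈ Icc 1 r, b i
  have hb : ∀ i ∈ Icc 1 r, 0 ≤ b i ∧ b i ≤ b 1 := fun i hi => by
    simp only [mem_Icc] at hi
    have := hanti i r hi.1 hi.2 le_rfl
    have := hanti 1 i le_rfl hi.1 hi.2
    simp only [b]
    omega
  have hℓS : (ℓ : ℤ) = r * m + S := by
    simp [hℓ, S, b, sum_sub_distrib]
  have hm : 2 ≤ m := by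
    simp only [m]
    exact_mod_cast hge2 r (by omega) le_rfl
  have hd : b 1 ^ 2 ≤ b 1 + 2 * m - 2 := by
    have := hdiff 1 r le_rfl (by omega) le_rfl
    simp only [b]
    linarith
  calc _ = r * ∑ i ∈ Icc 1 r, b i ^ 2 - S ^ 2 := by
        simp only [b, S, ← sum_Icc_sum_Icc_sub_sq, sub_sub_sub_cancel_right]
    _ ≤ r * (b 1 * S) - S ^ 2 := by gcongr; exact sum_sq_le_mul_sum _ _ _ hb
    _ ≤ _ := by
      rw [hℓS, ← mul_assoc]
      exact mul_mul_sub_sq_le _ _ _ _ (by exact_mod_cast hr) hm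
        (sum_nonneg fun i hi => (hb i hi).1) hd
end

section
/- Let t ≥ 2 be an integer and x, y reals with t ≤ x and x + 1 < y. Then ((x+1)/y)·C(x, t) + ((y−x−1)/y)·C(x+y, t) > C(y−1, t), where C(z, t) = z(z−1)···(z−t+1)/t! is the generalized binomial coefficient. -/
/-!
`C(·, t)` is `descPochhammer ℝ t` divided by `t!`. For `t ≥ 2` its derivative
`∑ i < t, ∏ j ≠ i, (z - j)` is a nonempty sum of nonempty products of positive increasing
factors on `(t - 1, ∞)`, so it is strictly convex on `[t - 1, ∞)`; the inequality is strict
Jensen at the distinct points `x` and `x + y`, whose weighted mean is `y - 1`.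
-/

open Set

lemma strictMonoOn_deriv_descPochhammer_eval {n : ℕ} (hn : 2 ≤ n) :
    StrictMonoOn (deriv (descPochhammer ℝ n).eval) (Ioi (n - 1 : ℝ)) := by
  intro a ha b _ hab
  rw [mem_Ioi] at ha
  simp_rw [deriv_descPochhammer_eval_eq_sum_prod_range_erase]
  refine Finset.sum_lt_sum_of_nonempty (by simp; omega) fun i hi => ?_
  refine Finset.prod_lt_prod_of_nonempty (fun j hj => ?_) (fun j _ => by linarith) ?_
  · rw [Finset.mem_erase, Finset.mem_range] at hj
    have hj_le : (j : ℝ) ≤ n - 1 := by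
      rw [le_sub_iff_add_le]
      exact_mod_cast hj.2
    linarith
  · rw [← Finset.card_pos, Finset.card_erase_of_mem hi, Finset.card_range]
    omega

theorem strictConvexOn_descPochhammer_eval {n : ℕ} (hn : 2 ≤ n) :
    StrictConvexOn ℝ (Ici (n - 1 : ℝ)) (descPochhammer ℝ n).eval := by
  apply StrictMonoOn.strictConvexOn_of_deriv (convex_Ici _)
    continuous_descPochhammer_eval.continuousOn
  rw [interior_Ici]
  exact strictMonoOn_deriv_descPochhammer_eval hn

/-- Jensen-type strict inequality for the real-argument binomial coefficient
`C(z,t) = z(z−1)⋯(z−t+1)/t!`: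
for integer `t ≥ 2` and reals `t ≤ x`, `x + 1 < y`,
`((x+1)/y)·C(x,t) + ((y−x−1)/y)·C(x+y,t) > C(y−1,t)`. -/
theorem jensen_binomial (t : ℕ) (ht : 2 ≤ t) (x y : ℝ) (hx : (t : ℝ) ≤ x) (hxy : x + 1 < y)
    (C : ℝ → ℕ → ℝ)
    (hC : ∀ z n, C z n = (∏ i ∈ Finset.range n, (z - (i : ℝ))) / (Nat.factorial n : ℝ)) :
    ((x + 1) / y) * C x t + ((y - x - 1) / y) * C (x + y) t > C (y - 1) t := by
  have hy : 0 < y := by linarith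
  have hCt : ∀ z, C z t = (descPochhammer ℝ t).eval z / t.factorial := fun z => by
    rw [hC, descPochhammer_eval_eq_prod_range]
  have hjensen := (strictConvexOn_descPochhammer_eval ht).2
    (by rw [mem_Ici]; linarith : x ∈ Ici ((t : ℝ) - 1))
    (by rw [mem_Ici]; linarith : x + y ∈ Ici ((t : ℝ) - 1)) (by linarith : x ≠ x + y)
    (div_pos (by linarith) hy : 0 < (x + 1) / y) (div_pos (by linarith) hy : 0 < (y - x - 1) / y)
    (by field_simp; ring)
  have hmean : (x + 1) / y * x + (y - x - 1) / y * (x + y) = y - 1 := by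
    field_simp
    ring
  simp only [smul_eq_mul, hmean] at hjensen
  simp only [hCt, gt_iff_lt, mul_div_assoc', ← add_div]
  exact div_lt_div_of_pos_right hjensen (by positivity)
end

section
/- Let t ≥ 2 be an integer and let x, y be integers with t ≤ x and x + 1 < y. Then y·C(y−1, t) − (x+1)·C(x, t) − (y−x−1)·C(x+y, t) < 0. -/
private lemma vand1 (b r : ℕ) : ∀ a : ℕ,
    Nat.choose b (r+1) + a * Nat.choose b r ≤ Nat.choose (a+b) (r+1) := by
  intro a
  induction a with
  | zero => simp
  | succ a ih =>
    have h2 : Nat.choose b r ≤ Nat.choose (a+b) r :=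
      Nat.choose_le_choose r (Nat.le_add_left b a)
    have he : a+1+b = (a+b)+1 := by ring
    have hs := Nat.choose_succ_succ (a+b) r
    have e : (a+1) * Nat.choose b r = a * Nat.choose b r + Nat.choose b r := by ring
    rw [he, hs]
    simp only [Nat.succ_eq_add_one] at *
    omega

private lemma vand2 (b r : ℕ) : ∀ m : ℕ,
    Nat.choose b (r+2) + m * Nat.choose b (r+1) + Nat.choose m 2 * Nat.choose b r
      ≤ Nat.choose (m+b) (r+2) := by
  intro m
  induction m with
  | zero => simp
  | succ m ih =>
    have h1 := vand1 b r m
    have he : m+1+b = (m+b)+1 := by ring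
    have hs : Nat.choose ((m+b)+1) (r+2)
        = Nat.choose (m+b) (r+1) + Nat.choose (m+b) (r+2) :=
      Nat.choose_succ_succ (m+b) (r+1)
    rw [he, hs]
    have hc : Nat.choose (m+1) 2 = Nat.choose m 1 + Nat.choose m 2 := Nat.choose_succ_succ m 1
    have hm1 : Nat.choose m 1 = m := Nat.choose_one_right m
    have e1 : (m+1) * Nat.choose b (r+1) = m * Nat.choose b (r+1) + Nat.choose b (r+1) := by ring
    have e2 : Nat.choose (m+1) 2 * Nat.choose b r
        = Nat.choose m 2 * Nat.choose b r + m * Nat.choose b r := by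
      rw [hc, hm1]; ring
    omega

private lemma pow_choose (a : ℕ) : ∀ k : ℕ, k ≤ a →
    2^k * Nat.choose a k ≤ Nat.choose (2*a) k := by
  intro k
  induction k with
  | zero => simp
  | succ k ih =>
    intro hk
    have ihk := ih (by omega)
    have h1 : Nat.choose a (k+1) * (k+1) = Nat.choose a k * (a - k) :=
      Nat.choose_succ_right_eq a k
    have h2 : Nat.choose (2*a) (k+1) * (k+1) = Nat.choose (2*a) k * (2*a - k) :=
      Nat.choose_succ_right_eq (2*a) k
    have key : 2^(k+1) * Nat.choose a (k+1) * (k+1) ≤ Nat.choose (2*a) (k+1) * (k+1) := by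
      have e : 2^(k+1) * Nat.choose a (k+1) * (k+1)
          = 2 * (2^k * (Nat.choose a (k+1) * (k+1))) := by ring
      rw [e, h1]
      have e2 : 2 * (2^k * (Nat.choose a k * (a - k)))
          = (2^k * Nat.choose a k) * (2 * (a - k)) := by ring
      rw [e2, h2]
      have hs : 2 * (a - k) ≤ 2*a - k := by omega
      exact Nat.mul_le_mul ihk hs
    exact Nat.le_of_mul_le_mul_right key (by omega)

private lemma two_pow_gt (k : ℕ) (hk : 2 ≤ k) : k + 1 < 2^k := by
  induction k with
  | zero => omega
  | succ k ih =>
    rcases Nat.lt_or_ge k 2 with h | h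
    · have hk1 : k = 1 := by omega
      subst hk1; norm_num
    · have h1 := ih h
      have h2 : 2^(k+1) = 2 * 2^k := by ring
      omega

/-- The telescoping step inequality. -/
private lemma stepS (r a d : ℕ) (hr : 1 ≤ r) :
    Nat.choose (a+d) (r+2) + (2*a+d+1) * Nat.choose (a+d) (r+1)
      ≤ d * Nat.choose (2*a+d) (r+1) + Nat.choose (2*a+d+1) (r+2) := by
  set b := a + d with hb
  have core2 : 2 * Nat.choose b (r+1) ≤ (a+2*d+1) * Nat.choose b r := by
    have h := Nat.choose_succ_right_eq b r
    calc 2 * Nat.choose b (r+1) = Nat.choose b (r+1) * 2 := by ring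
      _ ≤ Nat.choose b (r+1) * (r+1) := Nat.mul_le_mul_left _ (by omega)
      _ = Nat.choose b r * (b - r) := h
      _ ≤ Nat.choose b r * (a+2*d+1) := Nat.mul_le_mul_left _ (by omega)
      _ = (a+2*d+1) * Nat.choose b r := by ring
  have hc2 : Nat.choose (a+1) 2 * 2 = (a+1) * a := by
    have h := Nat.add_one_mul_choose_eq a 1
    rw [Nat.choose_one_right] at h
    exact h.symm
  have claimA : a * Nat.choose b (r+1) ≤ (a*d + Nat.choose (a+1) 2) * Nat.choose b r := by
    have h : a * (2 * Nat.choose b (r+1)) ≤ a * ((a+2*d+1) * Nat.choose b r) :=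
      Nat.mul_le_mul_left a core2
    refine Nat.le_of_mul_le_mul_left ?_ (show 0 < 2 by norm_num)
    calc 2 * (a * Nat.choose b (r+1)) = a * (2 * Nat.choose b (r+1)) := by ring
      _ ≤ a * ((a+2*d+1) * Nat.choose b r) := h
      _ = (a*(a+1) + 2*(a*d)) * Nat.choose b r := by ring
      _ = 2 * ((a*d + Nat.choose (a+1) 2) * Nat.choose b r) := by nlinarith [hc2]
  have hv1 : Nat.choose b (r+1) + a * Nat.choose b r ≤ Nat.choose (a+b) (r+1) := vand1 b r a
  have hv2 : Nat.choose b (r+2) + (a+1) * Nat.choose b (r+1)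
      + Nat.choose (a+1) 2 * Nat.choose b r ≤ Nat.choose ((a+1)+b) (r+2) := vand2 b r (a+1)
  have hv1d : d * (Nat.choose b (r+1) + a * Nat.choose b r) ≤ d * Nat.choose (a+b) (r+1) :=
    Nat.mul_le_mul_left d hv1
  have hab : a + b = 2*a+d := by omega
  have hab1 : (a+1)+b = 2*a+d+1 := by omega
  rw [hab] at hv1d
  rw [hab1] at hv2
  nlinarith [claimA, hv1d, hv2]

/-- Main inequality: `(2a+d)·C(a+d,r+2) < d·C(2a+d,r+2) + (2a+d)·C(a,r+2)`. -/
private lemma mainM (r a : ℕ) (hr : 1 ≤ r) (ha : r + 2 ≤ a) : ∀ d : ℕ, 1 ≤ d →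
    (2*a+d) * Nat.choose (a+d) (r+2)
      < d * Nat.choose (2*a+d) (r+2) + (2*a+d) * Nat.choose a (r+2) := by
  intro d hd
  induction d with
  | zero => omega
  | succ d ih =>
    rcases Nat.eq_or_lt_of_le hd with h1 | h1
    · -- base case d = 1
      have hd0 : d = 0 := by omega
      subst hd0
      have hsplit : Nat.choose (a+1) (r+2) = Nat.choose a (r+1) + Nat.choose a (r+2) :=
        Nat.choose_succ_succ a (r+1)
      have hp : 0 < Nat.choose a (r+1) := Nat.choose_pos (by omega)
      have he : r+2 < 2^(r+1) := two_pow_gt (r+1) (by omega)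
      have hP : 2^(r+1) * Nat.choose a (r+1) ≤ Nat.choose (2*a) (r+1) :=
        pow_choose a (r+1) (by omega)
      have hkey : (r+2) * Nat.choose a (r+1) < Nat.choose (2*a) (r+1) :=
        lt_of_lt_of_le ((Nat.mul_lt_mul_right hp).mpr he) hP
      have hid : (2*a+1) * Nat.choose (2*a) (r+1) = Nat.choose (2*a+1) (r+2) * (r+2) :=
        Nat.add_one_mul_choose_eq (2*a) (r+1)
      have hmain : (2*a+1) * Nat.choose a (r+1) < Nat.choose (2*a+1) (r+2) := by
        apply Nat.lt_of_mul_lt_mul_left (a := r+2)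
        calc (r+2) * ((2*a+1) * Nat.choose a (r+1))
            = (2*a+1) * ((r+2) * Nat.choose a (r+1)) := by ring
          _ < (2*a+1) * Nat.choose (2*a) (r+1) :=
              (Nat.mul_lt_mul_left (by omega)).mpr hkey
          _ = (r+2) * Nat.choose (2*a+1) (r+2) := by rw [hid]; ring
      rw [hsplit]
      nlinarith [hmain]
    · -- inductive step, d ≥ 1
      have hd1 : 1 ≤ d := by omega
      have ihd := ih hd1
      have hS := stepS r a d hr
      have h1 : Nat.choose (a+(d+1)) (r+2)
          = Nat.choose (a+d) (r+1) + Nat.choose (a+d) (r+2) := by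
        have e : a+(d+1) = (a+d)+1 := by ring
        rw [e]; exact Nat.choose_succ_succ (a+d) (r+1)
      have h2 : Nat.choose (2*a+(d+1)) (r+2)
          = Nat.choose (2*a+d) (r+1) + Nat.choose (2*a+d) (r+2) := by
        have e : 2*a+(d+1) = (2*a+d)+1 := by ring
        rw [e]; exact Nat.choose_succ_succ (2*a+d) (r+1)
      have h3 : Nat.choose (2*a+d+1) (r+2)
          = Nat.choose (2*a+d) (r+1) + Nat.choose (2*a+d) (r+2) :=
        Nat.choose_succ_succ (2*a+d) (r+1)
      rw [h1, h2]
      rw [h3] at hS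
      nlinarith [ihd, hS]

/-- For integers `t ≥ 2`, `x ≥ t`, `y > x + 1`:
`y·C(y−1,t) − (x+1)·C(x,t) − (y−x−1)·C(x+y,t) < 0`. -/
theorem binomial_combination_neg (t x y : ℕ) (ht : 2 ≤ t) (hx : t ≤ x) (hxy : x + 1 < y) :
    (y : ℤ) * (Nat.choose (y - 1) t : ℤ) - ((x : ℤ) + 1) * (Nat.choose x t : ℤ)
      - ((y : ℤ) - (x : ℤ) - 1) * (Nat.choose (x + y) t : ℤ) < 0 := by
  obtain ⟨r, rfl⟩ : ∃ r, t = r + 1 := ⟨t - 1, by omega⟩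
  have hr : 1 ≤ r := by omega
  obtain ⟨d, hd, rfl⟩ : ∃ d, 1 ≤ d ∧ y = (x+1) + d := ⟨y - x - 1, by omega, by omega⟩
  have hM := mainM r (x+1) hr (by omega) d hd
  have id1 : (x+d+1) * Nat.choose (x+d) (r+1) = Nat.choose (x+d+1) (r+2) * (r+2) := by
    have h := Nat.add_one_mul_choose_eq (x+d) (r+1)
    simpa [Nat.succ_eq_add_one] using h
  have id2 : (x+1) * Nat.choose x (r+1) = Nat.choose (x+1) (r+2) * (r+2) :=
    Nat.add_one_mul_choose_eq x (r+1)
  have id3 : (2*x+d+2) * Nat.choose (2*x+d+1) (r+1) = Nat.choose (2*x+d+2) (r+2) * (r+2) := by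
    have h := Nat.add_one_mul_choose_eq (2*x+d+1) (r+1)
    simpa [Nat.succ_eq_add_one] using h
  have e1 : 2*(x+1)+d = 2*x+d+2 := by ring
  have eA : (x+1)+d = x+d+1 := by ring
  rw [e1, eA] at hM
  -- cancel one factor (2x+d+2) after multiplying hM by (r+2)
  have key : (x+1+d) * Nat.choose (x+d) (r+1)
      < d * Nat.choose (2*x+d+1) (r+1) + (x+1) * Nat.choose x (r+1) := by
    apply Nat.lt_of_mul_lt_mul_left (a := 2*x+d+2)
    calc (2*x+d+2) * ((x+1+d) * Nat.choose (x+d) (r+1))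
        = (r+2) * ((2*x+d+2) * Nat.choose (x+d+1) (r+2)) := by
          have : (x+1+d) * Nat.choose (x+d) (r+1)
              = (x+d+1) * Nat.choose (x+d) (r+1) := by ring
          rw [this, id1]; ring
      _ < (r+2) * (d * Nat.choose (2*x+d+2) (r+2) + (2*x+d+2) * Nat.choose (x+1) (r+2)) :=
          (Nat.mul_lt_mul_left (by omega)).mpr hM
      _ = d * (Nat.choose (2*x+d+2) (r+2) * (r+2))
            + (2*x+d+2) * (Nat.choose (x+1) (r+2) * (r+2)) := by ring
      _ = d * ((2*x+d+2) * Nat.choose (2*x+d+1) (r+1))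
            + (2*x+d+2) * ((x+1) * Nat.choose x (r+1)) := by rw [← id2, ← id3]
      _ = (2*x+d+2) * (d * Nat.choose (2*x+d+1) (r+1) + (x+1) * Nat.choose x (r+1)) := by
          ring
  have e2 : x + 1 + d - 1 = x + d := by omega
  have e3 : x + (x + 1 + d) = 2*x+d+1 := by omega
  rw [e2, e3]
  have keyz : ((x:ℤ)+1+(d:ℤ)) * (Nat.choose (x+d) (r+1) : ℤ)
      < (d:ℤ) * (Nat.choose (2*x+d+1) (r+1) : ℤ)
        + ((x:ℤ)+1) * (Nat.choose x (r+1) : ℤ) := by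
    exact_mod_cast key
  push_cast
  linarith [keyz]
end
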